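/- arXiv:1812.05821 — 11 statements merged into one kernel-verified Lean document; each statement's English description precedes it below -/
import Mathlib

section
/- A partial function H = {(T_1,f_1),...,(T_n,f_n)} with T_i ⊆ [m] and f_i ≥ 0 is extendible to a monotone subadditive function f: 2^[m] → ℝ≥0 if and only if for all indices i_1,...,i_r, i_{r+1} ∈ [n] with T_{i_{r+1}} ⊆ T_{i_1} ∪ ... ∪ T_{i_r}, we have f_{i_1} + ... + f_{i_r} ≥ f_{i_{r+1}}. -/
/-! Necessity: monotonicity and subadditivity give
`f i' = g (T i') ≤ g (⋃ j, T (idx j)) ≤ ∑ j, f (idx j)`.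
Sufficiency: extend by assigning to `S` the least total weight of a nonempty family of the
`T i` covering `S`. This is monotone and subadditive because covers of `A` and `B` unite to a
cover of `A ∪ B`, and the covering condition says exactly that it does not undercut any
prescribed value `f i`. -/

open Finset

theorem Finset.apply_biUnion_le_sum {α β M : Type*} [DecidableEq α] [DecidableEq β]
    [AddCommMonoid M] [Preorder M] [AddLeftMono M] (g : Finset α → M)
    (hg : ∀ A B, g (A ∪ B) ≤ g A + g B) (t : β → Finset α) {s : Finset β} (hs : s.Nonempty) :
    g (s.biUnion t) ≤ ∑ j ∈ s, g (t j) := by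
  induction hs using Finset.Nonempty.cons_induction with
  | singleton j => simp
  | cons j s hj _ ih =>
    rw [cons_eq_insert, biUnion_insert, sum_insert hj]
    exact (hg _ _).trans (add_le_add_right ih _)

namespace SubadditiveExtension

variable {α ι : Type*} [DecidableEq α] [Fintype ι] [DecidableEq ι]
  (T : ι → Finset α) (f : ι → ℝ)

/-- `univ` is included as a fallback, so that a set with no cover gets the total weight. -/
def coveringIndexSets (S : Finset α) : Finset (Finset ι) :=
  insert univ (univ.filter fun I => I.Nonempty ∧ S ⊆ I.biUnion T)

noncomputable def minCoverSum (S : Finset α) : ℝ :=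
  (coveringIndexSets T S).inf' (insert_nonempty _ _) fun I => ∑ i ∈ I, f i

variable {T f}

theorem mem_coveringIndexSets {S : Finset α} {I : Finset ι} :
    I ∈ coveringIndexSets T S ↔ I = univ ∨ I.Nonempty ∧ S ⊆ I.biUnion T := by
  simp [coveringIndexSets]

theorem coveringIndexSets_anti {A B : Finset α} (hBA : B ⊆ A) :
    coveringIndexSets T A ⊆ coveringIndexSets T B := by
  intro I
  simp only [mem_coveringIndexSets]
  exact Or.imp_right fun h => ⟨h.1, hBA.trans h.2⟩

theorem union_mem_coveringIndexSets {A B : Finset α} {I J : Finset ι}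
    (hI : I ∈ coveringIndexSets T A) (hJ : J ∈ coveringIndexSets T B) :
    I ∪ J ∈ coveringIndexSets T (A ∪ B) := by
  rw [mem_coveringIndexSets] at *
  rcases hI with rfl | ⟨hI, hAI⟩
  · exact Or.inl (union_eq_left.2 (subset_univ J))
  rcases hJ with rfl | ⟨-, hBJ⟩
  · exact Or.inl (union_eq_right.2 (subset_univ I))
  rw [union_biUnion]
  exact Or.inr ⟨hI.mono subset_union_left, union_subset_union hAI hBJ⟩

theorem minCoverSum_le {S : Finset α} {I : Finset ι} (hI : I ∈ coveringIndexSets T S) :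
    minCoverSum T f S ≤ ∑ i ∈ I, f i :=
  inf'_le _ hI

theorem exists_minCoverSum_eq (S : Finset α) :
    ∃ I ∈ coveringIndexSets T S, minCoverSum T f S = ∑ i ∈ I, f i :=
  exists_mem_eq_inf' _ _

theorem minCoverSum_mono : Monotone (minCoverSum T f) :=
  fun _ _ hBA => inf'_mono _ (coveringIndexSets_anti hBA) _

variable (hf : ∀ i, 0 ≤ f i)
include hf

theorem minCoverSum_nonneg (S : Finset α) : 0 ≤ minCoverSum T f S :=
  le_inf' _ _ fun _ _ => sum_nonneg fun i _ => hf i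

theorem minCoverSum_union_le (A B : Finset α) :
    minCoverSum T f (A ∪ B) ≤ minCoverSum T f A + minCoverSum T f B := by
  obtain ⟨I, hI, hAI⟩ := exists_minCoverSum_eq (T := T) (f := f) A
  obtain ⟨J, hJ, hBJ⟩ := exists_minCoverSum_eq (T := T) (f := f) B
  calc minCoverSum T f (A ∪ B) ≤ ∑ i ∈ I ∪ J, f i :=
        minCoverSum_le (union_mem_coveringIndexSets hI hJ)
    _ ≤ ∑ i ∈ I, f i + ∑ i ∈ J, f i := by
        rw [← sum_union_inter]
        exact le_add_of_nonneg_right (sum_nonneg fun i _ => hf i)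
    _ = minCoverSum T f A + minCoverSum T f B := by rw [hAI, hBJ]

theorem minCoverSum_apply
    (hcover : ∀ i (I : Finset ι), I.Nonempty → T i ⊆ I.biUnion T → f i ≤ ∑ j ∈ I, f j)
    (i : ι) : minCoverSum T f (T i) = f i := by
  refine le_antisymm ?_ (le_inf' _ _ fun I hI => ?_)
  · simpa using minCoverSum_le (T := T) (f := f) (I := {i})
      (mem_coveringIndexSets.2 (Or.inr ⟨singleton_nonempty i, by simp⟩))
  rcases mem_coveringIndexSets.1 hI with rfl | ⟨hI, hcov⟩
  · exact single_le_sum (fun j _ => hf j) (mem_univ i)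
  · exact hcover i I hI hcov

end SubadditiveExtension

theorem Finset.exists_fin_enum_biUnion_eq_sum_eq {ι α M : Type*} [DecidableEq α]
    [AddCommMonoid M] (T : ι → Finset α) (f : ι → M) (I : Finset ι) :
    ∃ idx : Fin #I → ι, univ.biUnion (fun j => T (idx j)) = I.biUnion T ∧
      ∑ j, f (idx j) = ∑ i ∈ I, f i := by
  refine ⟨fun j => I.equivFin.symm j, ?_, ?_⟩
  · ext x
    simp only [mem_biUnion, mem_univ, true_and]
    exact ⟨fun ⟨j, hj⟩ => ⟨_, (I.equivFin.symm j).2, hj⟩,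
      fun ⟨i, hi, hx⟩ => ⟨I.equivFin ⟨i, hi⟩, by simpa using hx⟩⟩
  · rw [← sum_coe_sort I f]
    exact I.equivFin.symm.sum_comp fun i : I => f i

open SubadditiveExtension in
/-- A partial function is extendible to a monotone subadditive
nonnegative function on `2^[m]` iff the covering condition holds. -/
theorem subadditive_extension_iff (m n : ℕ) (T : Fin n → Finset (Fin m))
    (f : Fin n → ℝ) (hf : ∀ i, 0 ≤ f i) :
    (∃ g : Finset (Fin m) → ℝ,
        (∀ S, 0 ≤ g S) ∧
        (∀ A B : Finset (Fin m), B ⊆ A → g B ≤ g A) ∧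
        (∀ A B : Finset (Fin m), g (A ∪ B) ≤ g A + g B) ∧
        (∀ i, g (T i) = f i)) ↔
      (∀ (r : ℕ), 0 < r → ∀ (idx : Fin r → Fin n) (i' : Fin n),
        T i' ⊆ Finset.univ.biUnion (fun j => T (idx j)) →
        f i' ≤ ∑ j, f (idx j)) := by
  constructor
  · rintro ⟨g, -, hmono, hsub, hext⟩ r hr idx i' hcov
    calc f i' = g (T i') := (hext i').symm
      _ ≤ g (univ.biUnion fun j => T (idx j)) := hmono _ _ hcov
      _ ≤ ∑ j, g (T (idx j)) := apply_biUnion_le_sum g hsub _ (univ_nonempty_iff.2 ⟨⟨0, hr⟩⟩)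
      _ = ∑ j, f (idx j) := by simp only [hext]
  · intro h
    refine ⟨minCoverSum T f, minCoverSum_nonneg hf, fun _ _ hBA => minCoverSum_mono hBA,
      minCoverSum_union_le hf, minCoverSum_apply hf fun i I hI hcov => ?_⟩
    obtain ⟨idx, hunion, hsum⟩ := exists_fin_enum_biUnion_eq_sum_eq T f I
    rw [← hsum]
    exact h _ (card_pos.2 hI) idx i (hunion ▸ hcov)
end

section
/- Suppose the partial function H on points T_1,...,T_n ⊆ [m] with nonnegative values f_i satisfies: for all i_1,...,i_r, i_{r+1} with T_{i_{r+1}} ⊆ ∪_{j≤r} T_{i_j}, one has Σ_j f_{i_j} ≥ f_{i_{r+1}}. Then the function f̂ defined on subsets S of ∪_i T_i by f̂(S) = min { Σ_{j=1}^r f_{i_j} : S ⊆ ∪_{j=1}^r T_{i_j} } is a monotone subadditive extension of H on subsets of ∪_i T_i. -/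
/-!
A cover of `A` covers every subset of `A`, and concatenating covers of `A` and `B` gives a
cover of `A ∪ B` whose cost is the sum of the two costs; taking infima yields monotonicity
and subadditivity. The covering condition says precisely that no cover of `Tᵢ` is cheaper
than `Tᵢ` itself, so `f̂ (Tᵢ) = fᵢ`.
-/

open Finset
open scoped Pointwise

section CoverCosts

variable {α ι : Type*} [DecidableEq α] (T : ι → Finset α) (f : ι → ℝ)

def coverCosts (S : Finset α) : Set ℝ :=
  {x : ℝ | ∃ (r : ℕ) (_ : 0 < r) (idx : Fin r → ι),
    S ⊆ univ.biUnion (fun j => T (idx j)) ∧ x = ∑ j, f (idx j)}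

variable {T f}

theorem coverCosts_antitone : Antitone (coverCosts T f) := by
  rintro B A hBA x ⟨r, hr, idx, hcov, rfl⟩
  exact ⟨r, hr, idx, hBA.trans hcov, rfl⟩

theorem add_subset_coverCosts_union (A B : Finset α) :
    coverCosts T f A + coverCosts T f B ⊆ coverCosts T f (A ∪ B) := by
  rintro _ ⟨_, ⟨r₁, hr₁, idx₁, hcov₁, rfl⟩, _, ⟨r₂, -, idx₂, hcov₂, rfl⟩, rfl⟩
  refine ⟨r₁ + r₂, Nat.add_pos_left hr₁ _, Fin.append idx₁ idx₂, ?_, ?_⟩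
  · refine union_subset (fun a ha => ?_) (fun a ha => ?_)
    · obtain ⟨j, -, hj⟩ := mem_biUnion.mp (hcov₁ ha)
      exact mem_biUnion.mpr ⟨Fin.castAdd r₂ j, mem_univ _, by rwa [Fin.append_left]⟩
    · obtain ⟨j, -, hj⟩ := mem_biUnion.mp (hcov₂ ha)
      exact mem_biUnion.mpr ⟨Fin.natAdd r₁ j, mem_univ _, by rwa [Fin.append_right]⟩
  · simp only [Fin.sum_univ_add, Fin.append_left, Fin.append_right]

theorem coverCosts_bddBelow (hf : ∀ i, 0 ≤ f i) (S : Finset α) :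
    BddBelow (coverCosts T f S) := by
  refine ⟨0, ?_⟩
  rintro x ⟨r, -, idx, -, rfl⟩
  exact sum_nonneg fun j _ => hf (idx j)

theorem coverCosts_nonempty [Fintype ι] [Nonempty ι] {S : Finset α}
    (hS : S ⊆ univ.biUnion T) : (coverCosts T f S).Nonempty := by
  let e := (Fintype.equivFin ι).symm
  refine ⟨_, Fintype.card ι, Fintype.card_pos, e, fun a ha => ?_, rfl⟩
  obtain ⟨i, -, hi⟩ := mem_biUnion.mp (hS ha)
  exact mem_biUnion.mpr ⟨e.symm i, mem_univ _, by rwa [Equiv.apply_symm_apply]⟩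

theorem coverCosts_eq_empty [IsEmpty ι] (S : Finset α) : coverCosts T f S = ∅ := by
  refine Set.eq_empty_iff_forall_notMem.mpr ?_
  rintro x ⟨r, hr, idx, -, -⟩
  exact isEmptyElim (idx ⟨0, hr⟩)

theorem sInf_coverCosts_self
    (hcond : ∀ (r : ℕ), 0 < r → ∀ (idx : Fin r → ι) (i : ι),
      T i ⊆ univ.biUnion (fun j => T (idx j)) → f i ≤ ∑ j, f (idx j)) (i : ι) :
    sInf (coverCosts T f (T i)) = f i := by
  refine IsLeast.csInf_eq ⟨⟨1, one_pos, fun _ => i, by simp, by simp⟩, ?_⟩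
  rintro x ⟨r, hr, idx, hcov, rfl⟩
  exact hcond r hr idx i hcov

theorem sInf_coverCosts_mono [Fintype ι] (hf : ∀ i, 0 ≤ f i) {A B : Finset α}
    (hA : A ⊆ univ.biUnion T) (hBA : B ⊆ A) :
    sInf (coverCosts T f B) ≤ sInf (coverCosts T f A) := by
  cases isEmpty_or_nonempty ι
  · simp only [coverCosts_eq_empty, le_refl]
  · exact csInf_le_csInf (coverCosts_bddBelow hf B) (coverCosts_nonempty hA)
      (coverCosts_antitone hBA)

theorem sInf_coverCosts_union_le [Fintype ι] (hf : ∀ i, 0 ≤ f i) {A B : Finset α}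
    (hA : A ⊆ univ.biUnion T) (hB : B ⊆ univ.biUnion T) :
    sInf (coverCosts T f (A ∪ B)) ≤ sInf (coverCosts T f A) + sInf (coverCosts T f B) := by
  cases isEmpty_or_nonempty ι
  · simp only [coverCosts_eq_empty, Real.sInf_empty, add_zero, le_refl]
  · rw [← csInf_add (coverCosts_nonempty hA) (coverCosts_bddBelow hf A)
      (coverCosts_nonempty hB) (coverCosts_bddBelow hf B)]
    exact csInf_le_csInf (coverCosts_bddBelow hf _)
      ((coverCosts_nonempty hA).add (coverCosts_nonempty hB)) (add_subset_coverCosts_union A B)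

end CoverCosts

/-- under the covering condition, the minimum-cover function `f̂`
is a monotone subadditive extension of the partial function on subsets of `⋃ᵢ Tᵢ`. -/
theorem roof_is_monotone_subadditive_extension (m n : ℕ)
    (T : Fin n → Finset (Fin m)) (f : Fin n → ℝ) (hf : ∀ i, 0 ≤ f i)
    (hcond : ∀ (r : ℕ), 0 < r → ∀ (idx : Fin r → Fin n) (i' : Fin n),
      T i' ⊆ Finset.univ.biUnion (fun j => T (idx j)) → f i' ≤ ∑ j, f (idx j))
    (U : Finset (Fin m)) (hU : U = Finset.univ.biUnion T)
    (fhat : Finset (Fin m) → ℝ)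
    (hfhat : ∀ S : Finset (Fin m), S ⊆ U →
      fhat S = sInf {x : ℝ | ∃ (r : ℕ) (_ : 0 < r) (idx : Fin r → Fin n),
        S ⊆ Finset.univ.biUnion (fun j => T (idx j)) ∧ x = ∑ j, f (idx j)}) :
    (∀ i, fhat (T i) = f i) ∧
    (∀ A B : Finset (Fin m), A ⊆ U → B ⊆ A → fhat B ≤ fhat A) ∧
    (∀ A B : Finset (Fin m), A ⊆ U → B ⊆ U → fhat (A ∪ B) ≤ fhat A + fhat B) := by
  subst hU
  have hfhat : ∀ S ⊆ univ.biUnion T, fhat S = sInf (coverCosts T f S) := hfhat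
  refine ⟨fun i => ?_, fun A B hA hBA => ?_, fun A B hA hB => ?_⟩
  · rw [hfhat _ (subset_biUnion_of_mem T (mem_univ i)), sInf_coverCosts_self hcond]
  · rw [hfhat A hA, hfhat B (hBA.trans hA)]
    exact sInf_coverCosts_mono hf hA hBA
  · rw [hfhat A hA, hfhat B hB, hfhat _ (union_subset hA hB)]
    exact sInf_coverCosts_union_le hf hA hB
end

section
/- A partial function H = {(T_1,f_1),...,(T_n,f_n)} (with T_i ⊆ [m], f_i ≥ 0) is extendible to a fractionally subadditive (XOS) function if and only if for every index i and all nonnegative reals α_1,...,α_n such that for each element s ∈ T_i, Σ_{j : s ∈ T_j} α_j ≥ 1, we have f_i ≤ Σ_{j=1}^n α_j f_j. -/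
/-!
Necessity: a fractional cover of `T i` by the sets `T j` is, after merging the weights of
equal sets, a fractional cover by all subsets, so any XOS extension `g` gives
`f i = g (T i) ≤ ∑ α_j g (T j) = ∑ α_j f_j`.

Sufficiency: take `g A` to be the cheapest fractional cover of `A` by the sets `T j` at prices
`f j`, where the whole ground set is added at price `∑ f` so that every `A` has a cover.
Fractional subadditivity holds because nearly optimal covers of the sets `S` can be combined
with weights `α S` into a cover of `A`. Covering `T i` by itself gives `g (T i) ≤ f i`; conversely,
a cover that puts weight `γ < 1` on the ground set is rescaled by `1 / (1 - γ)` into a cover by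
the `T j` alone, and the hypothesis yields `f i ≤ g (T i)`.
-/

open Finset

variable {ι α : Type*}

def IsFracCover [Fintype ι] [DecidableEq α] (U : ι → Finset α) (A : Finset α) (w : ι → ℝ) :
    Prop :=
  (∀ k, 0 ≤ w k) ∧ ∀ s ∈ A, 1 ≤ ∑ k ∈ univ.filter (fun k => s ∈ U k), w k

def FracSubadditive [Fintype α] [DecidableEq α] (g : Finset α → ℝ) : Prop :=
  ∀ A w, IsFracCover id A w → g A ≤ ∑ S, w S * g S

section

variable [Fintype ι] [DecidableEq α]

lemma sum_filter_mem_eq_sum_mul_boole (U : ι → Finset α) (w : ι → ℝ) (s : α) :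
    ∑ k ∈ univ.filter (fun k => s ∈ U k), w k = ∑ k, w k * if s ∈ U k then 1 else 0 := by
  simp only [sum_filter, mul_boole]

lemma sum_sum_fiber_mul {κ : Type*} [Fintype κ] [DecidableEq κ] (e : ι → κ) (w : ι → ℝ)
    (h : κ → ℝ) : ∑ l, (∑ k ∈ univ.filter (fun k => e k = l), w k) * h l = ∑ k, w k * h (e k) := by
  rw [← sum_fiberwise univ e fun k => w k * h (e k)]
  refine sum_congr rfl fun l _ => ?_
  rw [sum_mul]
  exact sum_congr rfl fun k hk => by rw [(mem_filter.1 hk).2]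

variable {U : ι → Finset α}

lemma isFracCover_one (hU : ∀ s, ∃ k, s ∈ U k) (A : Finset α) : IsFracCover U A 1 := by
  refine ⟨fun _ => zero_le_one, fun s _ => ?_⟩
  obtain ⟨k, hk⟩ := hU s
  exact single_le_sum (f := 1) (fun _ _ => zero_le_one) (mem_filter.2 ⟨mem_univ k, hk⟩)

lemma isFracCover_single [DecidableEq ι] (k : ι) : IsFracCover U (U k) (Pi.single k 1) := by
  refine ⟨fun j => ?_, fun s hs => ?_⟩
  · rw [Pi.single_apply]; split_ifs <;> norm_num
  · rw [sum_pi_single', if_pos (mem_filter.2 ⟨mem_univ k, hs⟩)]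

lemma nonempty_isFracCover (hU : ∀ s, ∃ k, s ∈ U k) (A : Finset α) :
    Nonempty (Subtype (IsFracCover U A)) :=
  ⟨⟨1, isFracCover_one hU A⟩⟩

variable [Fintype α]

lemma IsFracCover.sum_fiber {A : Finset α} {w : ι → ℝ} (hw : IsFracCover U A w) :
    IsFracCover id A fun S => ∑ k ∈ univ.filter (fun k => U k = S), w k := by
  refine ⟨fun S => sum_nonneg fun k _ => hw.1 k, fun s hs => ?_⟩
  rw [sum_filter_mem_eq_sum_mul_boole, sum_sum_fiber_mul U w fun S => if s ∈ id S then 1 else 0,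
    ← sum_filter_mem_eq_sum_mul_boole]
  exact hw.2 s hs

lemma FracSubadditive.le_sum_of_isFracCover {g : Finset α → ℝ} (hg : FracSubadditive g)
    {A : Finset α} {w : ι → ℝ} (hw : IsFracCover U A w) : g A ≤ ∑ k, w k * g (U k) :=
  (hg A _ hw.sum_fiber).trans_eq (sum_sum_fiber_mul U w g)

lemma IsFracCover.bind {A : Finset α} {w : Finset α → ℝ} (hw : IsFracCover id A w)
    {v : Finset α → ι → ℝ} (hv : ∀ S, IsFracCover U S (v S)) :
    IsFracCover U A (∑ S, w S • v S) := by
  refine ⟨fun k => ?_, fun s hs => ?_⟩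
  · simp only [Finset.sum_apply, Pi.smul_apply, smul_eq_mul]
    exact sum_nonneg fun S _ => mul_nonneg (hw.1 S) ((hv S).1 k)
  calc (1 : ℝ) ≤ ∑ S, w S * if s ∈ S then 1 else 0 := by
        rw [← sum_filter_mem_eq_sum_mul_boole]; exact hw.2 s hs
    _ ≤ ∑ S, w S * ∑ k ∈ univ.filter (fun k => s ∈ U k), v S k := by
        refine sum_le_sum fun S _ => mul_le_mul_of_nonneg_left ?_ (hw.1 S)
        split_ifs with hsS
        · exact (hv S).2 s hsS
        · exact sum_nonneg fun k _ => (hv S).1 k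
    _ = ∑ k ∈ univ.filter (fun k => s ∈ U k), (∑ S, w S • v S) k := by
        simp only [Finset.sum_apply, Pi.smul_apply, smul_eq_mul, mul_sum]
        exact sum_comm

end

lemma sum_bind_mul {κ : Type*} [Fintype ι] [Fintype κ] (c : ι → ℝ) (w : κ → ℝ) (v : κ → ι → ℝ) :
    ∑ k, (∑ S, w S • v S) k * c k = ∑ S, w S * ∑ k, v S k * c k := by
  simp only [Finset.sum_apply, Pi.smul_apply, smul_eq_mul, sum_mul, mul_sum, mul_assoc]
  exact sum_comm

section FracCoverCost

variable [Fintype ι] [DecidableEq α] (U : ι → Finset α) (c : ι → ℝ)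

noncomputable def fracCoverCost (A : Finset α) : ℝ :=
  ⨅ w : Subtype (IsFracCover U A), ∑ k, w.1 k * c k

variable {U} {c}

lemma fracCoverCost_le (hc : ∀ k, 0 ≤ c k) {A : Finset α} {w : ι → ℝ}
    (hw : IsFracCover U A w) : fracCoverCost U c A ≤ ∑ k, w k * c k :=
  ciInf_le (f := fun v : Subtype (IsFracCover U A) => ∑ k, v.1 k * c k)
    ⟨0, by rintro _ ⟨v, rfl⟩; exact sum_nonneg fun k _ => mul_nonneg (v.2.1 k) (hc k)⟩ ⟨w, hw⟩

lemma le_fracCoverCost (hU : ∀ s, ∃ k, s ∈ U k) {A : Finset α} {x : ℝ}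
    (h : ∀ w, IsFracCover U A w → x ≤ ∑ k, w k * c k) : x ≤ fracCoverCost U c A :=
  have := nonempty_isFracCover hU A
  le_ciInf fun w => h w.1 w.2

lemma fracCoverCost_nonneg (hU : ∀ s, ∃ k, s ∈ U k) (hc : ∀ k, 0 ≤ c k) (A : Finset α) :
    0 ≤ fracCoverCost U c A :=
  le_fracCoverCost hU fun _ hw => sum_nonneg fun k _ => mul_nonneg (hw.1 k) (hc k)

lemma fracCoverCost_le_self (hc : ∀ k, 0 ≤ c k) (k : ι) : fracCoverCost U c (U k) ≤ c k := by
  classical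
  refine (fracCoverCost_le hc (isFracCover_single k)).trans_eq ?_
  simp [Pi.single_apply]

lemma exists_isFracCover_lt_fracCoverCost_add (hU : ∀ s, ∃ k, s ∈ U k) (A : Finset α) {δ : ℝ}
    (hδ : 0 < δ) : ∃ w, IsFracCover U A w ∧ ∑ k, w k * c k < fracCoverCost U c A + δ := by
  have := nonempty_isFracCover hU A
  obtain ⟨⟨w, hw⟩, hlt⟩ := exists_lt_of_ciInf_lt (lt_add_of_pos_right (fracCoverCost U c A) hδ)
  exact ⟨w, hw, hlt⟩

theorem fracSubadditive_fracCoverCost [Fintype α] (hU : ∀ s, ∃ k, s ∈ U k) (hc : ∀ k, 0 ≤ c k) :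
    FracSubadditive (fracCoverCost U c) := by
  intro A w hw
  refine le_of_forall_pos_le_add fun ε hε => ?_
  have hW : 0 ≤ ∑ S, w S := sum_nonneg fun S _ => hw.1 S
  set δ := ε / (∑ S, w S + 1)
  have hδ : 0 < δ := by positivity
  choose v hv hlt using fun S => exists_isFracCover_lt_fracCoverCost_add (c := c) hU S hδ
  calc fracCoverCost U c A ≤ ∑ k, (∑ S, w S • v S) k * c k := fracCoverCost_le hc (hw.bind hv)
    _ = ∑ S, w S * ∑ k, v S k * c k := sum_bind_mul c w v
    _ ≤ ∑ S, w S * (fracCoverCost U c S + δ) :=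
        sum_le_sum fun S _ => mul_le_mul_of_nonneg_left (hlt S).le (hw.1 S)
    _ = ∑ S, w S * fracCoverCost U c S + δ * ∑ S, w S := by
        simp only [mul_add, sum_add_distrib, ← sum_mul, mul_comm δ]
    _ ≤ ∑ S, w S * fracCoverCost U c S + ε := by
        have : δ * (∑ S, w S + 1) = ε := div_mul_cancel₀ ε (by positivity)
        linarith

end FracCoverCost

section GroundSetAdjoined

variable [Fintype ι] [Fintype α] [DecidableEq α] (T : ι → Finset α) (f : ι → ℝ)

lemma sum_filter_mem_option_elim (w : Option ι → ℝ) (s : α) :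
    ∑ k ∈ univ.filter (fun k => s ∈ k.elim univ T), w k
      = w none + ∑ j ∈ univ.filter (fun j => s ∈ T j), w (some j) := by
  rw [sum_filter, Fintype.sum_option, sum_filter]
  simp only [Option.elim_none, Option.elim_some, mem_univ, if_true]
  -- the two sides differ only in their `Decidable (s ∈ _)` instances
  rfl

lemma le_sum_of_isFracCover_option_elim (hf : ∀ j, 0 ≤ f j) {i : ι}
    (hi : ∀ w, IsFracCover T (T i) w → f i ≤ ∑ j, w j * f j) {w : Option ι → ℝ}
    (hw : IsFracCover (fun k => k.elim univ T) (T i) w) :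
    f i ≤ ∑ k, w k * k.elim (∑ j, f j) f := by
  rw [Fintype.sum_option]
  simp only [Option.elim_none, Option.elim_some]
  have hfi : f i ≤ ∑ j, f j := single_le_sum (fun j _ => hf j) (mem_univ i)
  have hrest : 0 ≤ ∑ j, w (some j) * f j := sum_nonneg fun j _ => mul_nonneg (hw.1 _) (hf j)
  rcases le_or_gt 1 (w none) with hγ | hγ
  · linarith [mul_le_mul_of_nonneg_right hγ ((hf i).trans hfi)]
  have hpos : 0 < 1 - w none := sub_pos.2 hγ
  have hcov : IsFracCover T (T i) fun j => w (some j) / (1 - w none) := by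
    refine ⟨fun j => div_nonneg (hw.1 _) hpos.le, fun s hs => ?_⟩
    have := hw.2 s hs
    rw [sum_filter_mem_option_elim] at this
    rw [← sum_div, le_div_iff₀ hpos]
    linarith
  have := hi _ hcov
  simp only [div_mul_eq_mul_div, ← sum_div, le_div_iff₀ hpos] at this
  linarith [mul_le_mul_of_nonneg_left hfi (hw.1 none)]

end GroundSetAdjoined

/-- A partial function is extendible to a fractionally subadditive
(XOS) function iff the fractional covering condition holds. -/
theorem xos_extension_iff (m n : ℕ) (T : Fin n → Finset (Fin m))
    (f : Fin n → ℝ) (hf : ∀ i, 0 ≤ f i) :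
    (∃ g : Finset (Fin m) → ℝ,
        (∀ S, 0 ≤ g S) ∧
        (∀ (A : Finset (Fin m)) (α : Finset (Fin m) → ℝ),
          (∀ S, 0 ≤ α S) →
          (∀ s ∈ A, 1 ≤ ∑ S ∈ Finset.univ.filter (fun S : Finset (Fin m) => s ∈ S), α S) →
          g A ≤ ∑ S : Finset (Fin m), α S * g S) ∧
        (∀ i, g (T i) = f i)) ↔
      (∀ (i : Fin n) (α : Fin n → ℝ),
        (∀ j, 0 ≤ α j) →
        (∀ s ∈ T i, 1 ≤ ∑ j ∈ Finset.univ.filter (fun j => s ∈ T j), α j) →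
        f i ≤ ∑ j, α j * f j) := by
  constructor
  · rintro ⟨g, -, hg, hgT⟩ i α hα hcov
    have := FracSubadditive.le_sum_of_isFracCover (fun A w hw => hg A w hw.1 hw.2) ⟨hα, hcov⟩
    simpa only [hgT] using this
  intro h
  set U : Option (Fin n) → Finset (Fin m) := fun k => k.elim univ T
  set c : Option (Fin n) → ℝ := fun k => k.elim (∑ j, f j) f
  have hU : ∀ s, ∃ k, s ∈ U k := fun s => ⟨none, mem_univ s⟩
  have hc : ∀ k, 0 ≤ c k := fun k => k.rec (sum_nonneg fun j _ => hf j) hf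
  refine ⟨fracCoverCost U c, fracCoverCost_nonneg hU hc,
    fun A w hw hcov => fracSubadditive_fracCoverCost hU hc A w ⟨hw, hcov⟩, fun i => ?_⟩
  exact (fracCoverCost_le_self hc (some i)).antisymm <| le_fracCoverCost hU fun w hw =>
    le_sum_of_isFracCover_option_elim T f hf (fun v hv => h i v hv.1 hv.2) hw
end

section
/- If D = {T_1,...,T_n} ⊆ 2^[m] is an r-cover free family, then for any values f_1,...,f_n with each f_i ∈ [1, r+1], the partial function {(T_1,f_1),...,(T_n,f_n)} is extendible to a monotone subadditive function on 2^[m]. -/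
/-!
Extend by a covering cost: `g S` is the cheapest way to pay for `S` when each set `T i` may be
bought at price `f i` and each point of `S` left uncovered costs `r + 1`. Any function of this
shape is nonnegative, monotone and subadditive (covers of `A` and `B` combine into a cover of
`A ∪ B`). Buying `T i` alone shows `g (T i) ≤ f i`; conversely a cheaper purchase would have to
cover `T i` by other sets, and cover freeness forces at least `r + 1` of them, costing at least
`r + 1 ≥ f i`.
-/

open Finset

namespace CoverCost

variable {ι α : Type*} [DecidableEq α] (T : ι → Finset α) (w : ι → ℝ) (c : ℝ)

def cost (S : Finset α) (s : Finset ι) : ℝ :=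
  ∑ i ∈ s, w i + c * #(S \ s.biUnion T)

noncomputable def minCost [Fintype ι] (S : Finset α) : ℝ :=
  univ.inf' univ_nonempty (cost T w c S)

variable {T w c}

theorem cost_nonneg (hw : ∀ i, 0 ≤ w i) (hc : 0 ≤ c) (S : Finset α) (s : Finset ι) :
    0 ≤ cost T w c S s :=
  add_nonneg (sum_nonneg fun i _ => hw i) (by positivity)

theorem cost_mono (hc : 0 ≤ c) {A B : Finset α} (hBA : B ⊆ A) (s : Finset ι) :
    cost T w c B s ≤ cost T w c A s := by
  unfold cost
  gcongr

theorem cost_union_le [DecidableEq ι] (hw : ∀ i, 0 ≤ w i) (hc : 0 ≤ c) (A B : Finset α)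
    (s t : Finset ι) : cost T w c (A ∪ B) (s ∪ t) ≤ cost T w c A s + cost T w c B t := by
  have hsum : ∑ i ∈ s ∪ t, w i ≤ ∑ i ∈ s, w i + ∑ i ∈ t, w i := by
    rw [← sum_union_inter]
    linarith [sum_nonneg fun i (_ : i ∈ s ∩ t) => hw i]
  have huncovered : (A ∪ B) \ (s ∪ t).biUnion T ⊆ A \ s.biUnion T ∪ B \ t.biUnion T := by
    rw [union_biUnion]
    intro x
    simp only [mem_sdiff, mem_union]
    tauto
  have hcard : (#((A ∪ B) \ (s ∪ t).biUnion T) : ℝ) ≤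
      #(A \ s.biUnion T) + #(B \ t.biUnion T) := by
    exact_mod_cast (card_le_card huncovered).trans (card_union_le _ _)
  unfold cost
  nlinarith

theorem cost_singleton (i : ι) : cost T w c (T i) {i} = w i := by
  simp [cost]

theorem le_cost_self (hw : ∀ i, 0 ≤ w i) {i : ι} (hic : w i ≤ c)
    (hcover : ∀ s : Finset ι, i ∉ s → T i ⊆ s.biUnion T → w i ≤ ∑ j ∈ s, w j)
    (s : Finset ι) : w i ≤ cost T w c (T i) s := by
  have hsum : 0 ≤ ∑ j ∈ s, w j := sum_nonneg fun j _ => hw j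
  have hc : 0 ≤ c := (hw i).trans hic
  unfold cost
  by_cases his : i ∈ s
  · have := single_le_sum (fun j _ => hw j) his
    have : 0 ≤ c * #(T i \ s.biUnion T) := by positivity
    linarith
  by_cases hsub : T i ⊆ s.biUnion T
  · have : 0 ≤ c * #(T i \ s.biUnion T) := by positivity
    linarith [hcover s his hsub]
  · have hpos : (1 : ℝ) ≤ #(T i \ s.biUnion T) := by
      exact_mod_cast card_pos.2 (sdiff_nonempty.2 hsub)
    nlinarith

variable [Fintype ι]

theorem minCost_le (S : Finset α) (s : Finset ι) : minCost T w c S ≤ cost T w c S s :=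
  inf'_le _ (mem_univ s)

theorem exists_minCost_eq (S : Finset α) : ∃ s, minCost T w c S = cost T w c S s := by
  obtain ⟨s, -, hs⟩ := exists_mem_eq_inf' univ_nonempty (cost T w c S)
  exact ⟨s, hs⟩

theorem minCost_nonneg (hw : ∀ i, 0 ≤ w i) (hc : 0 ≤ c) (S : Finset α) :
    0 ≤ minCost T w c S :=
  le_inf' _ _ fun s _ => cost_nonneg hw hc S s

theorem minCost_mono (hc : 0 ≤ c) {A B : Finset α} (hBA : B ⊆ A) :
    minCost T w c B ≤ minCost T w c A :=
  le_inf' _ _ fun s _ => (minCost_le B s).trans (cost_mono hc hBA s)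

theorem minCost_union_le [DecidableEq ι] (hw : ∀ i, 0 ≤ w i) (hc : 0 ≤ c) (A B : Finset α) :
    minCost T w c (A ∪ B) ≤ minCost T w c A + minCost T w c B := by
  obtain ⟨s, hs⟩ := exists_minCost_eq (T := T) (w := w) (c := c) A
  obtain ⟨t, ht⟩ := exists_minCost_eq (T := T) (w := w) (c := c) B
  rw [hs, ht]
  exact (minCost_le _ _).trans (cost_union_le hw hc A B s t)

theorem minCost_self (hw : ∀ i, 0 ≤ w i) {i : ι} (hic : w i ≤ c)
    (hcover : ∀ s : Finset ι, i ∉ s → T i ⊆ s.biUnion T → w i ≤ ∑ j ∈ s, w j) :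
    minCost T w c (T i) = w i :=
  le_antisymm ((minCost_le (T i) {i}).trans_eq (cost_singleton i))
    (le_inf' _ _ fun s _ => le_cost_self hw hic hcover s)

end CoverCost

theorem le_sum_of_coverFree {ι α : Type*} [DecidableEq α] {T : ι → Finset α} {r : ℕ}
    (hcf : ∀ (s : Finset ι) (i : ι), #s ≤ r → i ∉ s → ¬ T i ⊆ s.biUnion T)
    {w : ι → ℝ} (hw : ∀ i, 1 ≤ w i ∧ w i ≤ r + 1) (i : ι) (s : Finset ι) (his : i ∉ s)
    (hsub : T i ⊆ s.biUnion T) : w i ≤ ∑ j ∈ s, w j := by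
  have hcard : r + 1 ≤ #s := by
    by_contra h
    exact hcf s i (by omega) his hsub
  have : (#s : ℝ) ≤ ∑ j ∈ s, w j := by
    simpa using card_nsmul_le_sum s w 1 fun j _ => (hw j).1
  have : (r : ℝ) + 1 ≤ #s := by exact_mod_cast hcard
  linarith [(hw i).2]

theorem coverfree_extendible_general (m n r : ℕ) (T : Fin n → Finset (Fin m))
    (hcf : ∀ (s : Finset (Fin n)) (i : Fin n), s.card ≤ r → i ∉ s →
      ¬ T i ⊆ s.biUnion T)
    (f : Fin n → ℝ) (hf : ∀ i, 1 ≤ f i ∧ f i ≤ r + 1) :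
    ∃ g : Finset (Fin m) → ℝ,
      (∀ S, 0 ≤ g S) ∧
      (∀ A B : Finset (Fin m), B ⊆ A → g B ≤ g A) ∧
      (∀ A B : Finset (Fin m), g (A ∪ B) ≤ g A + g B) ∧
      (∀ i, g (T i) = f i) := by
  have hf_nonneg : ∀ i, 0 ≤ f i := fun i => zero_le_one.trans (hf i).1
  have hc : (0 : ℝ) ≤ r + 1 := by positivity
  exact ⟨CoverCost.minCost T f (r + 1), CoverCost.minCost_nonneg hf_nonneg hc,
    fun A B => CoverCost.minCost_mono hc, CoverCost.minCost_union_le hf_nonneg hc,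
    fun i => CoverCost.minCost_self hf_nonneg (hf i).2 (le_sum_of_coverFree hcf hf i)⟩

/-- if the defined sets form an `r`-cover free family, then any values
in `[1, r+1]` give a partial function extendible to a monotone subadditive function. -/
theorem coverfree_extendible (m n r : ℕ) (T : Fin n → Finset (Fin m))
    (hT : Function.Injective T)
    (hcf : ∀ (s : Finset (Fin n)) (i : Fin n), s.card ≤ r → i ∉ s →
      ¬ T i ⊆ s.biUnion T)
    (f : Fin n → ℝ) (hf : ∀ i, 1 ≤ f i ∧ f i ≤ r + 1) :
    ∃ g : Finset (Fin m) → ℝ,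
      (∀ S, 0 ≤ g S) ∧
      (∀ A B : Finset (Fin m), B ⊆ A → g B ≤ g A) ∧
      (∀ A B : Finset (Fin m), g (A ∪ B) ≤ g A + g B) ∧
      (∀ i, g (T i) = f i) :=
  coverfree_extendible_general m n r T hcf f hf
end

section
/- A partial function H = {(T_1,f_1),...,(T_n,f_n)} with T_i ⊆ [m] and f_i ∈ ℝ is extendible to a (not necessarily monotone) subadditive function f: 2^[m] → ℝ if and only if for all indices i_1,...,i_r such that T_{i_1} ∪ ... ∪ T_{i_r} = T_{i'} for some i' ∈ [n], we have f_{i_1} + ... + f_{i_r} ≥ f_{i'}. -/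
/-!
Necessity is subadditivity iterated over a cover. For sufficiency, the condition with a repeated
index (`f i ≤ f i + f i`) makes every `f i` nonnegative. Extend by letting `g A` be the least value
`∑ i ∈ S, f i` over the nonempty `S` whose sets `T i` cover `A` exactly, and the total `∑ i, f i`
when there is no such `S`. Taking the union of optimal covers of `A` and `B` gives a cover of
`A ∪ B`, so `g` is subadditive by nonnegativity, and the condition says precisely that no cover of
`T i` is cheaper than `{i}`.
-/

open Finset

section Subadditive

variable {ι α M : Type*} [DecidableEq α] [AddCommMonoid M] [Preorder M] [IsOrderedAddMonoid M]

theorem apply_biUnion_le_sum_of_subadditive {g : Finset α → M}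
    (hg : ∀ A B, g (A ∪ B) ≤ g A + g B) (F : ι → Finset α) {s : Finset ι} (hs : s.Nonempty) :
    g (s.biUnion F) ≤ ∑ i ∈ s, g (F i) := by
  classical
  induction hs using Finset.Nonempty.cons_induction with
  | singleton a => simp
  | cons a s ha _ ih =>
    rw [cons_eq_insert, biUnion_insert, sum_insert ha]
    exact (hg _ _).trans (add_le_add_right ih _)

end Subadditive

theorem le_sum_of_forall_fin_family {ι α M : Type*} [DecidableEq α] [AddCommMonoid M] [LE M]
    {T : ι → Finset α} {f : ι → M}
    (H : ∀ r, 0 < r → ∀ (idx : Fin r → ι) (i : ι),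
      univ.biUnion (fun j => T (idx j)) = T i → f i ≤ ∑ j, f (idx j))
    {S : Finset ι} (hS : S.Nonempty) {i : ι} (hU : S.biUnion T = T i) : f i ≤ ∑ j ∈ S, f j := by
  set e := S.equivFin.symm
  have hbiUnion : univ.biUnion (fun j => T (e j)) = S.biUnion T := by
    ext x
    simp [e.exists_congr_left]
  have hsum : ∑ j, f (e j) = ∑ j ∈ S, f j := by
    rw [e.sum_comp (fun j : S => f j), sum_coe_sort]
  simpa [hsum] using H S.card hS.card_pos (fun j => e j) i (hbiUnion.trans hU)

section MinCover

variable {ι α M : Type*} [Fintype ι] [DecidableEq α] [AddCommMonoid M]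
  (T : ι → Finset α) (f : ι → M)

def coverCost (A : Finset α) (S : Finset ι) : M :=
  if S.Nonempty ∧ S.biUnion T = A then ∑ i ∈ S, f i else ∑ i, f i

variable {T f}

theorem coverCost_of_cover {A : Finset α} {S : Finset ι} (hS : S.Nonempty ∧ S.biUnion T = A) :
    coverCost T f A S = ∑ i ∈ S, f i :=
  if_pos hS

theorem coverCost_of_not_cover {A : Finset α} {S : Finset ι}
    (hS : ¬(S.Nonempty ∧ S.biUnion T = A)) : coverCost T f A S = ∑ i, f i :=
  if_neg hS

variable [LinearOrder M]

variable (T f) in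
def minCoverCost (A : Finset α) : M :=
  univ.inf' univ_nonempty (coverCost T f A)

theorem minCoverCost_le_coverCost (A : Finset α) (S : Finset ι) :
    minCoverCost T f A ≤ coverCost T f A S :=
  inf'_le _ (mem_univ S)

theorem exists_minCoverCost_eq (A : Finset α) :
    ∃ S, minCoverCost T f A = coverCost T f A S := by
  obtain ⟨S, -, hS⟩ := exists_mem_eq_inf' univ_nonempty (coverCost T f A)
  exact ⟨S, hS⟩

variable [IsOrderedAddMonoid M]

theorem coverCost_nonneg (hf : 0 ≤ f) (A : Finset α) (S : Finset ι) :
    0 ≤ coverCost T f A S := by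
  unfold coverCost
  split_ifs <;> exact sum_nonneg fun i _ => hf i

theorem coverCost_le_sum_univ (hf : 0 ≤ f) (A : Finset α) (S : Finset ι) :
    coverCost T f A S ≤ ∑ i, f i := by
  unfold coverCost
  split_ifs
  exacts [sum_le_univ_sum_of_nonneg hf, le_rfl]

theorem coverCost_union_le [DecidableEq ι] (hf : 0 ≤ f) (A B : Finset α) (S S' : Finset ι) :
    coverCost T f (A ∪ B) (S ∪ S') ≤ coverCost T f A S + coverCost T f B S' := by
  by_cases hS : S.Nonempty ∧ S.biUnion T = A
  · by_cases hS' : S'.Nonempty ∧ S'.biUnion T = B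
    · have hcover : (S ∪ S').Nonempty ∧ (S ∪ S').biUnion T = A ∪ B :=
        ⟨hS.1.mono subset_union_left, by rw [union_biUnion, hS.2, hS'.2]⟩
      rw [coverCost_of_cover hS, coverCost_of_cover hS', coverCost_of_cover hcover,
        ← sum_union_inter]
      exact le_add_of_nonneg_right (sum_nonneg fun i _ => hf i)
    · rw [coverCost_of_not_cover hS']
      exact (coverCost_le_sum_univ hf _ _).trans (le_add_of_nonneg_left (coverCost_nonneg hf _ _))
  · rw [coverCost_of_not_cover hS]
    exact (coverCost_le_sum_univ hf _ _).trans (le_add_of_nonneg_right (coverCost_nonneg hf _ _))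

theorem minCoverCost_union_le (hf : 0 ≤ f) (A B : Finset α) :
    minCoverCost T f (A ∪ B) ≤ minCoverCost T f A + minCoverCost T f B := by
  classical
  obtain ⟨S, hS⟩ := exists_minCoverCost_eq (T := T) (f := f) A
  obtain ⟨S', hS'⟩ := exists_minCoverCost_eq (T := T) (f := f) B
  rw [hS, hS']
  exact (minCoverCost_le_coverCost _ _).trans (coverCost_union_le hf A B S S')

theorem minCoverCost_apply (hf : 0 ≤ f)
    (hcover : ∀ S : Finset ι, S.Nonempty → ∀ i, S.biUnion T = T i → f i ≤ ∑ j ∈ S, f j)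
    (i : ι) : minCoverCost T f (T i) = f i := by
  refine le_antisymm ?_ (le_inf' _ _ fun S _ => ?_)
  · simpa [coverCost_of_cover ⟨singleton_nonempty i, singleton_biUnion⟩] using
      minCoverCost_le_coverCost (T := T) (f := f) (T i) {i}
  · by_cases hS : S.Nonempty ∧ S.biUnion T = T i
    · rw [coverCost_of_cover hS]
      exact hcover S hS.1 i hS.2
    · rw [coverCost_of_not_cover hS]
      exact single_le_sum (fun j _ => hf j) (mem_univ i)

end MinCover

/-- extendibility to a (not necessarily monotone) subadditive function. -/
theorem general_subadditive_extension_iff (m n : ℕ) (T : Fin n → Finset (Fin m))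
    (f : Fin n → ℝ) :
    (∃ g : Finset (Fin m) → ℝ,
        (∀ A B : Finset (Fin m), g (A ∪ B) ≤ g A + g B) ∧
        (∀ i, g (T i) = f i)) ↔
      (∀ (r : ℕ), 0 < r → ∀ (idx : Fin r → Fin n) (i' : Fin n),
        Finset.univ.biUnion (fun j => T (idx j)) = T i' →
        f i' ≤ ∑ j, f (idx j)) := by
  constructor
  · rintro ⟨g, hsub, hext⟩ r hr idx i' hunion
    calc f i' = g (univ.biUnion fun j => T (idx j)) := by rw [hunion, hext]
      _ ≤ ∑ j, g (T (idx j)) := apply_biUnion_le_sum_of_subadditive hsub _ ⟨⟨0, hr⟩, mem_univ _⟩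
      _ = ∑ j, f (idx j) := by simp only [hext]
  · intro H
    have hf : 0 ≤ f := fun i => by
      have hdouble := H 2 two_pos (fun _ => i) i (by ext; simp)
      rw [Fin.sum_univ_two] at hdouble
      exact le_add_iff_nonneg_left _ |>.1 hdouble
    exact ⟨minCoverCost T f, minCoverCost_union_le hf,
      minCoverCost_apply hf fun S hS i hU => le_sum_of_forall_fin_family H hS hU⟩
end

section
/- Let D ⊆ 2^[m] be an antichain (no set in D contains another). Then for any assignment of real values f: D → ℝ, there exists a submodular function g: 2^[m] → ℝ with g(S) = f(S) for all S ∈ D. -/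
/-!
Fix an upper bound `C` of `f` on `D`. Every up-set indicator `s ↦ [t ≤ s]` is supermodular, so
`g s = C + ∑ t ∈ D, [t ≤ s] (f t - C)` is submodular, its coefficients `f t - C` being
nonpositive.
On the antichain `D` only the term `t = s` survives, whence `g s = f s`.
-/

open Finset

variable {α β ι : Type*}

def IsSubmodular [Lattice α] [Add β] [LE β] (g : α → β) : Prop :=
  ∀ a b, g (a ⊔ b) + g (a ⊓ b) ≤ g a + g b

namespace IsSubmodular

variable [Lattice α]

theorem const [Add β] [Preorder β] (c : β) : IsSubmodular fun _ : α => c :=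
  fun _ _ => le_rfl

theorem add [AddCommMonoid β] [PartialOrder β] [IsOrderedAddMonoid β] {g h : α → β}
    (hg : IsSubmodular g) (hh : IsSubmodular h) :
    IsSubmodular (g + h) := fun a b =>
  calc g (a ⊔ b) + h (a ⊔ b) + (g (a ⊓ b) + h (a ⊓ b))
      = (g (a ⊔ b) + g (a ⊓ b)) + (h (a ⊔ b) + h (a ⊓ b)) := add_add_add_comm ..
    _ ≤ (g a + g b) + (h a + h b) := add_le_add (hg a b) (hh a b)
    _ = g a + h a + (g b + h b) := add_add_add_comm ..

theorem sum [AddCommMonoid β] [PartialOrder β] [IsOrderedAddMonoid β] {s : Finset ι}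
    {g : ι → α → β} (hg : ∀ i ∈ s, IsSubmodular (g i)) :
    IsSubmodular fun a => ∑ i ∈ s, g i a := fun a b => by
  simpa only [← sum_add_distrib] using sum_le_sum fun i hi => hg i hi a b

theorem ite_le_of_nonpos [AddZeroClass β] [Preorder β] [DecidableLE α] (t : α) {c : β}
    (hc : c ≤ 0) :
    IsSubmodular fun a => if t ≤ a then c else 0 := fun a b => by
  by_cases ha : t ≤ a <;> by_cases hb : t ≤ b
  · simp [ha, hb, le_sup_of_le_left ha]
  · simp [ha, hb, le_sup_of_le_left ha]
  · simp [ha, hb, le_sup_of_le_right hb]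
  · simp only [ha, hb, le_inf_iff, and_self, if_false, add_zero]
    split_ifs <;> simp [hc]

end IsSubmodular

theorem IsAntichain.sum_ite_le_eq [PartialOrder α] [DecidableLE α] [AddCommMonoid β]
    {D : Finset α} (hD : IsAntichain (· ≤ ·) (D : Set α)) {s : α} (hs : s ∈ D)
    (h : α → β) :
    ∑ t ∈ D, (if t ≤ s then h t else 0) = h s := by
  rw [sum_eq_single_of_mem s hs fun t ht hts => if_neg (hD ht hs hts), if_pos le_rfl]

theorem IsAntichain.exists_isSubmodular_eq [Lattice α] [AddCommGroup β] [LinearOrder β]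
    [IsOrderedAddMonoid β] {D : Finset α} (hD : IsAntichain (· ≤ ·) (D : Set α))
    (f : α → β) : ∃ g : α → β, IsSubmodular g ∧ ∀ s ∈ D, g s = f s := by
  classical
  obtain ⟨C, hC⟩ := (D.image f).bddAbove
  have hfC : ∀ t ∈ D, f t - C ≤ 0 := fun t ht =>
    sub_nonpos.2 (hC (mem_coe.2 (mem_image_of_mem f ht)))
  refine ⟨fun s => C + ∑ t ∈ D, if t ≤ s then f t - C else 0, ?_, fun s hs => ?_⟩
  · exact (IsSubmodular.const C).add
      (IsSubmodular.sum fun t ht => IsSubmodular.ite_le_of_nonpos t (hfC t ht))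
  · simp only [hD.sum_ite_le_eq hs, add_sub_cancel]

/-- any partial function defined on an antichain extends to a
submodular function. -/
theorem antichain_submodular_extension (m : ℕ) (D : Finset (Finset (Fin m)))
    (hD : ∀ A ∈ D, ∀ B ∈ D, A ≠ B → ¬ A ⊆ B)
    (f : Finset (Fin m) → ℝ) :
    ∃ g : Finset (Fin m) → ℝ,
      (∀ A B : Finset (Fin m), g (A ∪ B) + g (A ∩ B) ≤ g A + g B) ∧
      (∀ S ∈ D, g S = f S) :=
  IsAntichain.exists_isSubmodular_eq (fun A hA B hB hAB => hD A hA B hB hAB) f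
end

section
/- A partial function H = {(T_1,f_1),...,(T_n,f_n)} on subsets of [m] is extendible to a submodular function on 2^[m] if and only if there does not exist a square certificate for H. -/
/-- The number of times `S` occurs as a middle point of a multiset of square tuples,
each square tuple being recorded by its pair of middle sets `(A, B)`. -/
def midCount {m : ℕ} (C : Multiset (Finset (Fin m) × Finset (Fin m)))
    (S : Finset (Fin m)) : ℕ :=
  (C.map (fun p => (if p.1 = S then 1 else 0) + (if p.2 = S then 1 else 0))).sum

/-- The number of times `S` occurs as a top or bottom point of a multiset of square
tuples. -/
def tbCount {m : ℕ} (C : Multiset (Finset (Fin m) × Finset (Fin m)))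
    (S : Finset (Fin m)) : ℕ :=
  (C.map (fun p => (if p.1 ∪ p.2 = S then 1 else 0) + (if p.1 ∩ p.2 = S then 1 else 0))).sum

/-- A square certificate for the partial function `(T, f)`: (P1) every set occurring
a different number of times as a middle point than as a top/bottom point is a defined
point, and (P2) `Σᵢ fᵢ (tb(Tᵢ) − m(Tᵢ)) > 0`. -/
def IsSquareCertificate {m n : ℕ} (T : Fin n → Finset (Fin m)) (f : Fin n → ℝ)
    (C : Multiset (Finset (Fin m) × Finset (Fin m))) : Prop :=
  (∀ S : Finset (Fin m), midCount C S ≠ tbCount C S → ∃ i, T i = S) ∧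
  0 < ∑ i, f i * ((tbCount C (T i) : ℝ) - (midCount C (T i) : ℝ))

/-!
Submodular extensions of `f` are the real solutions `g` of a finite system of linear inequalities
with rational coefficients: `g (A ∪ B) + g (A ∩ B) - g A - g B ≤ 0` for every square and
`g (T i) = f i` written as two inequalities. By Fourier–Motzkin elimination such a system is
either solvable or some nonnegative *rational* combination of its rows vanishes on the left and is
negative on the right. Clearing denominators, the weights of the square rows become the
multiplicities of a multiset of squares. In the coordinate `S` of the vanishing combination,
`tb - m` at `S` is balanced by the weights of the defined points with `T i = S`, which gives (P1),
and the negative right-hand side is (P2). Conversely, summing the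
submodularity inequalities over a certificate gives `∑ i, f i * (tb - m) (T i) ≤ 0`.
-/

open Finset

lemma Finset.exists_le_le_of_forall_le {α : Type*} [LinearOrder α] [Nonempty α]
    {L U : Finset α} (h : ∀ l ∈ L, ∀ u ∈ U, l ≤ u) :
    ∃ t, (∀ l ∈ L, l ≤ t) ∧ ∀ u ∈ U, t ≤ u := by
  rcases L.eq_empty_or_nonempty with rfl | hL
  · rcases U.eq_empty_or_nonempty with rfl | hU
    · simp
    · exact ⟨U.min' hU, by simp, fun u hu => min'_le U u hu⟩
  · exact ⟨L.max' hL, fun l hl => le_max' L l hl, h _ (max'_mem L hL)⟩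

lemma sum_sum_mul_smul {K V κ ρ : Type*} [Semiring K] [AddCommMonoid V] [Module K V]
    [Fintype κ] [Fintype ρ] (u : κ → K) (M : κ → ρ → K) (v : ρ → V) :
    ∑ r, (∑ c, u c * M c r) • v r = ∑ c, u c • ∑ r, M c r • v r := by
  simp only [Finset.sum_smul, Finset.smul_sum, mul_smul]
  exact Finset.sum_comm

lemma exists_pos_nat_mul_eq_natCast {α : Type*} [Fintype α] (u : α → ℚ) (hu : 0 ≤ u) :
    ∃ d : ℕ, 0 < d ∧ ∃ N : α → ℕ, ∀ a, (N a : ℚ) = d * u a := by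
  refine ⟨∏ a, (u a).den, prod_pos fun a _ => (u a).den_pos, ?_⟩
  have (a : α) : ∃ N : ℕ, (N : ℚ) = (∏ a, (u a).den : ℕ) * u a := by
    obtain ⟨k, hk⟩ := dvd_prod_of_mem (fun a => (u a).den) (mem_univ a)
    refine ⟨(u a).num.toNat * k, ?_⟩
    rw [hk, Nat.cast_mul, Nat.cast_mul, mul_right_comm, mul_comm _ (u a), Rat.mul_den_eq_num,
      ← Int.toNat_of_nonneg (Rat.num_nonneg.2 (hu a))]
    norm_cast
  choose N hN using this
  exact ⟨N, hN⟩

lemma Multiset.sum_map_sum_nsmul_singleton {α M : Type*} [Fintype α] [AddCommMonoid M]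
    (N : α → ℕ) (φ : α → M) : ((∑ a, N a • {a} : Multiset α).map φ).sum = ∑ a, N a • φ a := by
  rw [← Multiset.coe_mapAddMonoidHom, map_sum, ← Multiset.coe_sumAddMonoidHom, map_sum]
  simp [Multiset.map_nsmul, Multiset.sum_nsmul]

section FourierMotzkin

variable {K : Type*} [Field K] [LinearOrder K] {ι ρ : Type*}

abbrev FMRow (a : ρ → K) : Type _ := {r // a r = 0} ⊕ {r // 0 < a r} × {r // a r < 0}

/-- Paired rows are rescaled so that their coefficients of the eliminated variable cancel. -/
def fmCombination [DecidableEq ρ] (a : ρ → K) : FMRow a → ρ → K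
  | .inl z => Pi.single z.1 1
  | .inr (p, q) => (a p)⁻¹ • Pi.single p.1 1 + (-a q)⁻¹ • Pi.single q.1 1

section fmCombination

variable [DecidableEq ρ] {a : ρ → K}

lemma fmCombination_nonneg [IsStrictOrderedRing K] : 0 ≤ fmCombination a := by
  have hsingle (s r : ρ) : (0 : K) ≤ (Pi.single s 1 : ρ → K) r := by
    rw [Pi.single_apply]; split_ifs <;> simp
  rintro (z | ⟨p, q⟩) r
  · exact hsingle z r
  · exact add_nonneg (mul_nonneg (inv_nonneg.2 p.2.le) (hsingle p r))
      (mul_nonneg (inv_nonneg.2 (neg_nonneg.2 q.2.le)) (hsingle q r))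

variable [Fintype ρ] {W : Type*} [AddCommGroup W] [Module K W]

@[simp]
lemma sum_fmCombination_inl_smul (z : {r // a r = 0}) (v : ρ → W) :
    ∑ r, fmCombination a (.inl z) r • v r = v z := by
  simp [fmCombination, Pi.single_apply]

@[simp]
lemma sum_fmCombination_inr_smul (p : {r // 0 < a r}) (q : {r // a r < 0}) (v : ρ → W) :
    ∑ r, fmCombination a (.inr (p, q)) r • v r = (a p)⁻¹ • v p + (-a q)⁻¹ • v q := by
  simp [fmCombination, Pi.single_apply, add_smul, sum_add_distrib]

lemma sum_fmCombination_mul_self (c : FMRow a) : ∑ r, fmCombination a c r * a r = 0 := by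
  rcases c with z | ⟨p, q⟩
  · simpa only [smul_eq_mul] using (sum_fmCombination_inl_smul z a).trans z.2
  · have h := sum_fmCombination_inr_smul p q a
    simp only [smul_eq_mul] at h
    rw [h, inv_mul_cancel₀ p.2.ne', inv_neg, neg_mul, inv_mul_cancel₀ q.2.ne, add_neg_cancel]

end fmCombination

variable [IsStrictOrderedRing K] [Fintype ρ]
  {V : Type*} [AddCommGroup V] [LinearOrder V] [Module K V]

def IsFarkasCertificate (A : ρ → ι → K) (b : ρ → V) (y : ρ → K) : Prop :=
  0 ≤ y ∧ (∀ i, ∑ r, y r * A r i = 0) ∧ ∑ r, y r • b r < 0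

lemma IsFarkasCertificate.of_combination {κ : Type*} [Fintype κ] {A : ρ → ι → K} {b : ρ → V}
    {M : κ → ρ → K} (hM : 0 ≤ M) {y : κ → K}
    (hy : IsFarkasCertificate (fun c i => ∑ r, M c r * A r i) (fun c => ∑ r, M c r • b r) y) :
    IsFarkasCertificate A b (fun r => ∑ c, y c * M c r) := by
  obtain ⟨hy0, hyA, hyb⟩ := hy
  refine ⟨fun r => sum_nonneg fun c _ => mul_nonneg (hy0 c) (hM c r), fun i => ?_, ?_⟩
  · simpa only [smul_eq_mul] using (sum_sum_mul_smul y M (A · i)).trans (hyA i)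
  · exact (sum_sum_mul_smul y M b).trans_lt hyb

variable [IsOrderedAddMonoid V] [PosSMulMono K V]

lemma exists_smul_le_of_inv_smul_le (a : ρ → K) (B : ρ → V) (hzero : ∀ r, a r = 0 → 0 ≤ B r)
    (hpair : ∀ p q, 0 < a p → a q < 0 → (a q)⁻¹ • B q ≤ (a p)⁻¹ • B p) :
    ∃ t : V, ∀ r, a r • t ≤ B r := by
  classical
  obtain ⟨t, hLt, htU⟩ := exists_le_le_of_forall_le
    (L := (univ.filter (a · < 0)).image fun r => (a r)⁻¹ • B r)
    (U := (univ.filter (0 < a ·)).image fun r => (a r)⁻¹ • B r) (by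
      simp only [mem_image, mem_filter, mem_univ, true_and]
      rintro _ ⟨q, hq, rfl⟩ _ ⟨p, hp, rfl⟩
      exact hpair p q hp hq)
  refine ⟨t, fun r => ?_⟩
  rcases lt_trichotomy (a r) 0 with hr | hr | hr
  · exact (inv_smul_le_iff_of_neg hr).1 (hLt _ (mem_image_of_mem _ (by simpa using hr)))
  · simpa [hr] using hzero r hr
  · exact (le_inv_smul_iff_of_pos hr).1 (htU _ (mem_image_of_mem _ (by simpa using hr)))

lemma exists_smul_le_of_sum_fmCombination_nonneg [DecidableEq ρ] (a : ρ → K) (B : ρ → V)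
    (h : ∀ c, 0 ≤ ∑ r, fmCombination a c r • B r) : ∃ t : V, ∀ r, a r • t ≤ B r := by
  refine exists_smul_le_of_inv_smul_le a B (fun r hr => by simpa using h (.inl ⟨r, hr⟩))
    fun p q hp hq => ?_
  simpa [inv_neg, neg_smul, ← sub_eq_add_neg] using h (.inr (⟨p, hp⟩, ⟨q, hq⟩))

variable [Fintype ι]

lemma exists_le_of_fmCombination [DecidableEq ρ] {A : ρ → ι → K} {b : ρ → V}
    (k : ι) {x : ι → V} (hx : ∀ c, ∑ i, (∑ r, fmCombination (A · k) c r * A r i) • x i ≤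
      ∑ r, fmCombination (A · k) c r • b r) :
    ∃ x : ι → V, ∀ r, ∑ i, A r i • x i ≤ b r := by
  classical
  obtain ⟨t, ht⟩ := exists_smul_le_of_sum_fmCombination_nonneg (A · k)
    (fun r => b r - ∑ i, A r i • x i) fun c => by
      simpa only [smul_sub, sum_sub_distrib, sub_nonneg, ← sum_sum_mul_smul] using hx c
  refine ⟨x + Pi.single k t, fun r => ?_⟩
  simpa [smul_add, sum_add_distrib, Pi.single_apply, le_sub_iff_add_le'] using ht r

lemma exists_le_or_isFarkasCertificate_of_support (s : Finset ι) (A : ρ → ι → K) (b : ρ → V)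
    (hA : ∀ r, ∀ i ∉ s, A r i = 0) :
    (∃ x : ι → V, ∀ r, ∑ i, A r i • x i ≤ b r) ∨ ∃ y, IsFarkasCertificate A b y := by
  classical
  induction s using Finset.induction_on generalizing ρ with
  | empty =>
    by_cases hb : ∀ r, 0 ≤ b r
    · exact .inl ⟨0, by simpa using hb⟩
    · obtain ⟨r₀, hr₀⟩ := not_forall.1 hb
      exact .inr ⟨Pi.single r₀ 1, Pi.single_nonneg.2 zero_le_one,
        fun i => by simp [hA _ i (notMem_empty i)], by simpa using not_le.1 hr₀⟩
  | insert k s _ ih =>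
    have hA' (c : FMRow (A · k)) (i : ι) (hi : i ∉ s) :
        ∑ r, fmCombination (A · k) c r * A r i = 0 := by
      by_cases hik : i = k
      · subst hik; exact sum_fmCombination_mul_self c
      · exact sum_eq_zero fun r _ => by rw [hA r i (by simp [hik, hi]), mul_zero]
    rcases ih _ _ hA' with ⟨x, hx⟩ | ⟨y, hy⟩
    · exact .inl (exists_le_of_fmCombination k hx)
    · exact .inr ⟨_, hy.of_combination fmCombination_nonneg⟩

theorem exists_le_or_isFarkasCertificate (A : ρ → ι → K) (b : ρ → V) :
    (∃ x : ι → V, ∀ r, ∑ i, A r i • x i ≤ b r) ∨ ∃ y, IsFarkasCertificate A b y := by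
  classical
  exact exists_le_or_isFarkasCertificate_of_support univ A b fun r i hi => absurd (mem_univ i) hi

end FourierMotzkin

section squareDefect

variable {α : Type*} [DecidableEq α]

def squareDefect {R : Type*} [AddCommGroup R] (g : Finset α → R) (p : Finset α × Finset α) : R :=
  g (p.1 ∪ p.2) + g (p.1 ∩ p.2) - g p.1 - g p.2

lemma sum_squareDefect_single_smul [Fintype α] {K W : Type*} [Ring K] [AddCommGroup W]
    [Module K W] (g : Finset α → W) (p : Finset α × Finset α) :
    ∑ S, squareDefect (Pi.single S (1 : K)) p • g S = squareDefect g p := by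
  simp [squareDefect, sub_smul, add_smul, sum_sub_distrib, sum_add_distrib, Pi.single_apply]

end squareDefect

section SquareCertificate

variable {m n : ℕ}

lemma tbCount_sub_midCount {R : Type*} [CommRing R]
    (C : Multiset (Finset (Fin m) × Finset (Fin m))) (S : Finset (Fin m)) :
    (tbCount C S : R) - midCount C S = (C.map (squareDefect (Pi.single S 1))).sum := by
  simp only [tbCount, midCount, Nat.cast_multiset_sum, Multiset.map_map, ← Multiset.sum_map_sub]
  congr 1
  refine Multiset.map_congr rfl fun p _ => ?_
  simp [squareDefect, Pi.single_apply]
  ring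

lemma sum_tbCount_sub_midCount_mul (C : Multiset (Finset (Fin m) × Finset (Fin m)))
    (g : Finset (Fin m) → ℝ) :
    ∑ S, ((tbCount C S : ℝ) - midCount C S) * g S = (C.map (squareDefect g)).sum := by
  simp only [tbCount_sub_midCount, ← Multiset.sum_map_mul_right, ← Multiset.sum_map_sum]
  refine congrArg Multiset.sum (Multiset.map_congr rfl fun p _ => ?_)
  simpa only [smul_eq_mul] using sum_squareDefect_single_smul (K := ℝ) g p

lemma IsSquareCertificate.exists_lt_of_forall_eq {T : Fin n → Finset (Fin m)} {f : Fin n → ℝ}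
    (hT : Function.Injective T) {C : Multiset (Finset (Fin m) × Finset (Fin m))}
    (hC : IsSquareCertificate T f C) {g : Finset (Fin m) → ℝ} (hg : ∀ i, g (T i) = f i) :
    ∃ A B, g A + g B < g (A ∪ B) + g (A ∩ B) := by
  obtain ⟨hmid, hpos⟩ := hC
  have hsum : ∑ i, f i * ((tbCount C (T i) : ℝ) - midCount C (T i)) =
      (C.map (squareDefect g)).sum := by
    rw [← sum_tbCount_sub_midCount_mul]
    refine Fintype.sum_of_injective T hT _ _ (fun S hS => ?_) fun i => by rw [hg, mul_comm]
    rw [not_not.1 ((hmid S).mt hS), sub_self, zero_mul]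
  by_contra! hsub
  have hle : (C.map (squareDefect g)).sum ≤ (C.map fun _ => (0 : ℝ)).sum :=
    Multiset.sum_map_le_sum_map _ _ fun p _ => by
      simpa [squareDefect, sub_sub, sub_nonpos] using hsub p.1 p.2
  simp only [Multiset.map_const', Multiset.sum_replicate, smul_zero] at hle
  linarith

end SquareCertificate

section ExtensionSystem

variable {m n : ℕ} {T : Fin n → Finset (Fin m)} {f : Fin n → ℝ}

abbrev ExtensionRow (m n : ℕ) : Type := (Finset (Fin m) × Finset (Fin m)) ⊕ (Fin n ⊕ Fin n)

/-- The coefficients are rational so that a Farkas certificate can be scaled to integer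
multiplicities of squares. -/
def extensionMatrix (T : Fin n → Finset (Fin m)) : ExtensionRow m n → Finset (Fin m) → ℚ
  | .inl p, S => squareDefect (Pi.single S 1) p
  | .inr (.inl i), S => if T i = S then 1 else 0
  | .inr (.inr i), S => -if T i = S then 1 else 0

def extensionBound (f : Fin n → ℝ) : ExtensionRow m n → ℝ
  | .inl _ => 0
  | .inr (.inl i) => f i
  | .inr (.inr i) => -f i

lemma submodular_and_eq_of_extensionMatrix {g : Finset (Fin m) → ℝ}
    (hg : ∀ r, ∑ S, extensionMatrix T r S • g S ≤ extensionBound f r) :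
    (∀ A B, g (A ∪ B) + g (A ∩ B) ≤ g A + g B) ∧ ∀ i, g (T i) = f i := by
  refine ⟨fun A B => ?_, fun i => le_antisymm ?_ ?_⟩
  · have := hg (.inl (A, B))
    simp only [extensionMatrix, extensionBound, sum_squareDefect_single_smul] at this
    unfold squareDefect at this
    linarith
  · simpa [extensionMatrix, extensionBound, ite_smul] using hg (.inr (.inl i))
  · simpa [extensionMatrix, extensionBound, ite_smul] using hg (.inr (.inr i))

lemma isSquareCertificate_sum_nsmul_singleton (hT : Function.Injective T)
    (N : Finset (Fin m) × Finset (Fin m) → ℕ) (w : Fin n → ℚ)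
    (hbal : ∀ S, ∑ p, (N p : ℚ) * squareDefect (Pi.single S 1) p =
      ∑ i, w i * if T i = S then 1 else 0)
    (hw : 0 < ∑ i, f i * w i) : IsSquareCertificate T f (∑ p, N p • {p}) := by
  have hcount (S : Finset (Fin m)) : (tbCount (∑ p, N p • {p}) S : ℚ) -
      midCount (∑ p, N p • {p}) S = ∑ i, w i * if T i = S then 1 else 0 := by
    rw [tbCount_sub_midCount, Multiset.sum_map_sum_nsmul_singleton]
    simpa [nsmul_eq_mul] using hbal S
  refine ⟨fun S hS => ?_, ?_⟩
  · by_contra! hTS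
    have h0 : (tbCount (∑ p, N p • {p}) S : ℚ) - midCount (∑ p, N p • {p}) S = 0 := by
      simp [hcount, hTS]
    exact hS (by exact_mod_cast (sub_eq_zero.1 h0).symm)
  · have hcount' (j : Fin n) : (tbCount (∑ p, N p • {p}) (T j) : ℝ) -
        midCount (∑ p, N p • {p}) (T j) = w j := by
      have := hcount (T j)
      simp only [hT.eq_iff, mul_ite, mul_one, mul_zero, sum_ite_eq', mem_univ, if_true] at this
      exact_mod_cast this
    simpa [hcount'] using hw

lemma IsFarkasCertificate.exists_isSquareCertificate (hT : Function.Injective T)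
    {y : ExtensionRow m n → ℚ}
    (hy : IsFarkasCertificate (extensionMatrix T) (extensionBound f) y) :
    ∃ C, IsSquareCertificate T f C := by
  obtain ⟨hy0, hyA, hyb⟩ := hy
  obtain ⟨d, hd, N, hN⟩ := exists_pos_nat_mul_eq_natCast (fun p => y (.inl p)) fun p => hy0 _
  set w : Fin n → ℚ := fun i => y (.inr (.inl i)) - y (.inr (.inr i))
  refine ⟨_, isSquareCertificate_sum_nsmul_singleton hT N (fun i => -d * w i) (fun S => ?_) ?_⟩
  · have := hyA S
    simp only [Fintype.sum_sum_type, extensionMatrix, mul_neg, sum_neg_distrib] at this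
    simp only [hN, mul_assoc, ← mul_sum, w, sub_mul, sum_sub_distrib]
    linear_combination (d : ℚ) * this
  · have hwf : ∑ i, f i * (w i : ℝ) < 0 := by
      simpa [Fintype.sum_sum_type, extensionBound, Rat.smul_def, w, mul_sub, sum_sub_distrib,
        mul_comm] using hyb
    have hscale : ∑ i, f i * ((-d * w i : ℚ) : ℝ) = -d * ∑ i, f i * (w i : ℝ) := by
      rw [mul_sum]
      exact sum_congr rfl fun i _ => by push_cast; ring
    rw [hscale]
    exact mul_pos_of_neg_of_neg (by simpa using hd) hwf

end ExtensionSystem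

/-- a partial function is extendible to a submodular function on the
hypercube iff there is no square certificate for it. -/
theorem submodular_extension_iff_no_square_certificate (m n : ℕ)
    (T : Fin n → Finset (Fin m)) (f : Fin n → ℝ) (hT : Function.Injective T) :
    (∃ g : Finset (Fin m) → ℝ,
        (∀ A B : Finset (Fin m), g (A ∪ B) + g (A ∩ B) ≤ g A + g B) ∧
        (∀ i, g (T i) = f i)) ↔
      ¬ ∃ C : Multiset (Finset (Fin m) × Finset (Fin m)), IsSquareCertificate T f C := by
  constructor
  · rintro ⟨g, hsub, hg⟩ ⟨C, hC⟩
    obtain ⟨A, B, hAB⟩ := hC.exists_lt_of_forall_eq hT hg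
    exact (hsub A B).not_gt hAB
  · intro hC
    rcases exists_le_or_isFarkasCertificate (extensionMatrix T) (extensionBound f) with
      ⟨g, hg⟩ | ⟨y, hy⟩
    · exact ⟨g, submodular_and_eq_of_extensionMatrix hg⟩
    · exact (hC (hy.exists_isSquareCertificate hT)).elim
end

section
/- In a boolean circuit with AND and OR gates of fan-in 2 (possibly containing cycles), if for a fixed assignment to the input gates a gate g is fixed to value b' and also fixed to value b'', then b' = b''. -/
/-! Induct on a derivation fixing `g` to `b`, against one fixing `g` to `!b`: at an input both
values are `x g`; at an AND gate a derivation of 0 needs some child fixed to 0 while one of 1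
needs both children fixed to 1, so the conflict passes to a child (dually at an OR gate). -/

/-- A boolean circuit (possibly cyclic): each non-input gate is an AND or OR gate
with fan-in 2, its two inputs given by `in1` and `in2`. -/
structure BoolCircuit (ι : Type) where
  isInput : ι → Prop
  /-- `true` means AND gate, `false` means OR gate (meaningless on inputs). -/
  isAnd : ι → Bool
  in1 : ι → ι
  in2 : ι → ι

/-- `Fixed C x g b`: given the assignment `x` to the input gates, gate `g` is fixed
to value `b`, witnessed by a finite rooted-tree proof (the derivation tree):
leaves are input gates carrying their assigned values; an AND gate with a single
child has value 0 with its child of value 0; an OR gate with a single child has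
value 1 with its child of value 1; an AND gate with two children has all values 1;
an OR gate with two children has all values 0. -/
inductive BoolCircuit.Fixed {ι : Type} (C : BoolCircuit ι) (x : ι → Bool) :
    ι → Bool → Prop
  | input (g : ι) (h : C.isInput g) : Fixed C x g (x g)
  | and_zero_left (g : ι) (h : ¬ C.isInput g) (hop : C.isAnd g = true)
      (h1 : Fixed C x (C.in1 g) false) : Fixed C x g false
  | and_zero_right (g : ι) (h : ¬ C.isInput g) (hop : C.isAnd g = true)
      (h2 : Fixed C x (C.in2 g) false) : Fixed C x g false
  | and_one (g : ι) (h : ¬ C.isInput g) (hop : C.isAnd g = true)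
      (h1 : Fixed C x (C.in1 g) true) (h2 : Fixed C x (C.in2 g) true) :
      Fixed C x g true
  | or_one_left (g : ι) (h : ¬ C.isInput g) (hop : C.isAnd g = false)
      (h1 : Fixed C x (C.in1 g) true) : Fixed C x g true
  | or_one_right (g : ι) (h : ¬ C.isInput g) (hop : C.isAnd g = false)
      (h2 : Fixed C x (C.in2 g) true) : Fixed C x g true
  | or_zero (g : ι) (h : ¬ C.isInput g) (hop : C.isAnd g = false)
      (h1 : Fixed C x (C.in1 g) false) (h2 : Fixed C x (C.in2 g) false) :
      Fixed C x g false

namespace BoolCircuit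

variable {ι : Type} {C : BoolCircuit ι} {x : ι → Bool} {g : ι} {b : Bool}

theorem fixed_iff_of_isInput (hg : C.isInput g) : C.Fixed x g b ↔ b = x g := by
  refine ⟨fun h ↦ ?_, fun hb ↦ hb ▸ .input g hg⟩
  cases h <;> first | rfl | contradiction

theorem fixed_false_iff_of_isAnd (hg : ¬ C.isInput g) (hop : C.isAnd g = true) :
    C.Fixed x g false ↔ C.Fixed x (C.in1 g) false ∨ C.Fixed x (C.in2 g) false := by
  refine ⟨fun h ↦ ?_, Or.rec (.and_zero_left g hg hop) (.and_zero_right g hg hop)⟩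
  generalize hb : false = b at h
  cases h <;> simp_all

theorem fixed_true_iff_of_isAnd (hg : ¬ C.isInput g) (hop : C.isAnd g = true) :
    C.Fixed x g true ↔ C.Fixed x (C.in1 g) true ∧ C.Fixed x (C.in2 g) true := by
  refine ⟨fun h ↦ ?_, fun h ↦ .and_one g hg hop h.1 h.2⟩
  generalize hb : true = b at h
  cases h <;> simp_all

theorem fixed_true_iff_of_isOr (hg : ¬ C.isInput g) (hop : C.isAnd g = false) :
    C.Fixed x g true ↔ C.Fixed x (C.in1 g) true ∨ C.Fixed x (C.in2 g) true := by
  refine ⟨fun h ↦ ?_, Or.rec (.or_one_left g hg hop) (.or_one_right g hg hop)⟩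
  generalize hb : true = b at h
  cases h <;> simp_all

theorem fixed_false_iff_of_isOr (hg : ¬ C.isInput g) (hop : C.isAnd g = false) :
    C.Fixed x g false ↔ C.Fixed x (C.in1 g) false ∧ C.Fixed x (C.in2 g) false := by
  refine ⟨fun h ↦ ?_, fun h ↦ .or_zero g hg hop h.1 h.2⟩
  generalize hb : false = b at h
  cases h <;> simp_all

theorem Fixed.not_fixed_not (h : C.Fixed x g b) : ¬ C.Fixed x g (!b) := by
  induction h with
  | input g hg => simp [fixed_iff_of_isInput hg]
  | and_zero_left g hg hop _ ih => exact fun h ↦ ih ((fixed_true_iff_of_isAnd hg hop).1 h).1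
  | and_zero_right g hg hop _ ih => exact fun h ↦ ih ((fixed_true_iff_of_isAnd hg hop).1 h).2
  | and_one g hg hop _ _ ih₁ ih₂ =>
    exact fun h ↦ ((fixed_false_iff_of_isAnd hg hop).1 h).elim ih₁ ih₂
  | or_one_left g hg hop _ ih => exact fun h ↦ ih ((fixed_false_iff_of_isOr hg hop).1 h).1
  | or_one_right g hg hop _ ih => exact fun h ↦ ih ((fixed_false_iff_of_isOr hg hop).1 h).2
  | or_zero g hg hop _ _ ih₁ ih₂ =>
    exact fun h ↦ ((fixed_true_iff_of_isOr hg hop).1 h).elim ih₁ ih₂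

end BoolCircuit

/-- for a fixed input assignment, a gate cannot be fixed to two
different values. -/
theorem fixed_value_unique {ι : Type} (C : BoolCircuit ι) (x : ι → Bool)
    (g : ι) (b' b'' : Bool)
    (h' : C.Fixed x g b') (h'' : C.Fixed x g b'') : b' = b'' := by
  by_contra hne
  exact h'.not_fixed_not (Bool.eq_not_iff.2 (Ne.symm hne) ▸ h'')
end

section
/- Let H = {(T_1,f_1),...,(T_n,f_n)} with T_i ∈ ℝ^m. Define ĝ(x) as the infimum of Σ_i λ_i f_i over λ ≥ 0 with Σ_i λ_i = 1 and Σ_i λ_i T_i = x. Then H is extendible to a convex function on ℝ^m if and only if ĝ(T_i) = f_i for all i ∈ [n]. -/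
/-!
For a convex extension `g`, Jensen's inequality gives `g x ≤ ∑ λⱼ fⱼ` for every convex
representation `x = ∑ λⱼ Tⱼ`, so `fᵢ = g(Tᵢ) ≤ ĝ(Tᵢ) ≤ fᵢ`.

Conversely, `ĝ(Tᵢ) = fᵢ` implies that no conic combination of the vectors `(Tⱼ - Tᵢ, fⱼ - fᵢ)` equals
`(0, -1)`. The cone they generate is closed (by the conic Carathéodory theorem it is a finite union
of linear images of closed orthants), so Hahn–Banach separates `(0, -1)` from it; the separating
functional is non-vertical and yields an affine minorant of the data that is exact at `Tᵢ`. The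
maximum of these `n` affine functions is the required extension.
-/

open Set Finset

variable {ι E : Type*} [AddCommGroup E] [Module ℝ E]

theorem exists_linearIndepOn_subset_sum_smul_eq {𝕜 V : Type*} [Field 𝕜] [LinearOrder 𝕜]
    [IsStrictOrderedRing 𝕜] [AddCommGroup V] [Module 𝕜 V] (v : ι → V) (s : Finset ι)
    (c : ι → 𝕜) (hc : ∀ j ∈ s, 0 ≤ c j) :
    ∃ t ⊆ s, LinearIndepOn 𝕜 v t ∧
      ∃ d : ι → 𝕜, (∀ j ∈ t, 0 ≤ d j) ∧ ∑ j ∈ t, d j • v j = ∑ j ∈ s, c j • v j := by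
  classical
  induction s using Finset.strongInduction generalizing c with
  | H s ih =>
  by_cases hs : LinearIndepOn 𝕜 v s
  · exact ⟨s, subset_rfl, hs, c, hc, rfl⟩
  obtain ⟨g, hg, i, his, hgi⟩ := not_linearIndepOn_finset_iff.mp hs
  wlog hgi_pos : 0 < g i generalizing g
  · refine this (-g) (by simp [neg_smul, hg]) (by simpa using hgi) ?_
    simpa using lt_of_le_of_ne (not_lt.mp hgi_pos) hgi
  -- the first coefficient that `c - r • g` drives to zero as `r` grows
  obtain ⟨k, hk, hk_min⟩ := ({j ∈ s | 0 < g j}).exists_min_image (fun j => c j / g j)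
    ⟨i, mem_filter.mpr ⟨his, hgi_pos⟩⟩
  obtain ⟨hks, hgk⟩ := mem_filter.mp hk
  set c' : ι → 𝕜 := fun j => c j - c k / g k * g j
  have hc'k : c' k = 0 := by simp [c', hgk.ne']
  have hc' : ∀ j ∈ s, 0 ≤ c' j := by
    intro j hj
    simp only [c', sub_nonneg]
    rcases lt_or_ge 0 (g j) with hgj | hgj
    · exact (le_div_iff₀ hgj).mp (hk_min j (mem_filter.mpr ⟨hj, hgj⟩))
    · exact (mul_nonpos_of_nonneg_of_nonpos (div_nonneg (hc k hks) hgk.le) hgj).trans (hc j hj)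
  have hsum : ∑ j ∈ s.erase k, c' j • v j = ∑ j ∈ s, c j • v j := by
    rw [sum_erase _ (by simp [hc'k])]
    simp only [c', sub_smul, sum_sub_distrib, mul_smul, ← smul_sum, hg, smul_zero, sub_zero]
  obtain ⟨t, hts, ht, d, hd, hdt⟩ :=
    ih _ (erase_ssubset hks) c' fun j hj => hc' j (mem_of_mem_erase hj)
  exact ⟨t, hts.trans (erase_subset k s), ht, d, hd, hdt.trans hsum⟩

theorem PointedCone.mem_hull_range_iff [Fintype ι] {v : ι → E} {x : E} :
    x ∈ PointedCone.hull ℝ (range v) ↔ ∃ c : ι → ℝ, (∀ j, 0 ≤ c j) ∧ ∑ j, c j • v j = x := by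
  rw [Submodule.mem_span_range_iff_exists_fun]
  constructor
  · rintro ⟨c, rfl⟩
    exact ⟨fun j => c j, fun j => (c j).2, rfl⟩
  · rintro ⟨c, hc, rfl⟩
    exact ⟨fun j => ⟨c j, hc j⟩, rfl⟩

theorem PointedCone.isClosed_hull_range [TopologicalSpace E] [IsTopologicalAddGroup E]
    [ContinuousSMul ℝ E] [T2Space E] [Fintype ι] (v : ι → E) :
    IsClosed (PointedCone.hull ℝ (range v) : Set E) := by
  classical
  have hcover : (PointedCone.hull ℝ (range v) : Set E) =
      ⋃ (t : Finset ι) (_ : LinearIndepOn ℝ v t),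
        Fintype.linearCombination ℝ (fun j : (t : Set ι) => v j) '' Ici 0 := by
    refine Subset.antisymm (fun x hx => ?_) (iUnion₂_subset fun t _ => ?_)
    · obtain ⟨c, hc, rfl⟩ := PointedCone.mem_hull_range_iff.mp hx
      obtain ⟨t, -, ht, d, hd, hdt⟩ :=
        exists_linearIndepOn_subset_sum_smul_eq v univ c fun j _ => hc j
      refine mem_iUnion₂.mpr ⟨t, ht, fun j => d j, fun j => hd j j.2, ?_⟩
      rw [Fintype.linearCombination_apply, ← hdt]
      exact t.sum_coe_sort fun j => d j • v j
    · rintro _ ⟨d, hd, rfl⟩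
      rw [Fintype.linearCombination_apply]
      exact Submodule.sum_mem _ fun j _ =>
        PointedCone.smul_mem _ (hd j) (PointedCone.subset_hull ⟨j, rfl⟩)
  rw [hcover]
  refine isClosed_iUnion_of_finite fun t => isClosed_iUnion_of_finite fun ht => ?_
  exact (LinearMap.isClosedEmbedding_of_injective (LinearMap.ker_eq_bot.mpr
    (linearIndependent_iff_injective_fintypeLinearCombination.mp ht))).isClosedMap _ isClosed_Ici

theorem exists_strongDual_le_of_nonneg_combination [TopologicalSpace E] [IsTopologicalAddGroup E]
    [ContinuousSMul ℝ E] [LocallyConvexSpace ℝ E] [T2Space E] [Fintype ι] (w : ι → E) (g : ι → ℝ)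
    (h : ∀ c : ι → ℝ, (∀ j, 0 ≤ c j) → ∑ j, c j • w j = 0 → 0 ≤ ∑ j, c j * g j) :
    ∃ φ : StrongDual ℝ E, ∀ j, φ (w j) ≤ g j := by
  let C : ProperCone ℝ (E × ℝ) :=
    ⟨PointedCone.hull ℝ (range fun j => (w j, g j)), PointedCone.isClosed_hull_range _⟩
  have hC : ((0 : E), (-1 : ℝ)) ∉ C := by
    intro hmem
    obtain ⟨c, hc, hsum⟩ := PointedCone.mem_hull_range_iff.mp hmem
    have hw : ∑ j, c j • w j = 0 := by simpa [Prod.fst_sum] using congrArg Prod.fst hsum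
    have hg : ∑ j, c j * g j = -1 := by simpa [Prod.snd_sum] using congrArg Prod.snd hsum
    linarith [h c hc hw]
  obtain ⟨ψ, hψC, hψ⟩ := C.hyperplane_separation_point hC
  have hsplit : ∀ x t, ψ (x, t) = ψ (x, 0) + t * ψ (0, 1) := fun x t => by
    rw [← smul_eq_mul, ← map_smul, ← map_add, Prod.smul_mk, Prod.mk_add_mk]
    simp
  have hpos : 0 < ψ (0, 1) := by
    have := hsplit 0 (-1)
    simp only [Prod.mk_zero_zero, map_zero, zero_add] at this
    linarith
  refine ⟨-(ψ (0, 1))⁻¹ • ψ.comp (ContinuousLinearMap.inl ℝ E ℝ), fun j => ?_⟩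
  have hj : 0 ≤ ψ (w j, g j) := hψC _ (PointedCone.subset_hull ⟨j, rfl⟩)
  rw [hsplit] at hj
  simp only [smul_apply, ContinuousLinearMap.comp_apply,
    ContinuousLinearMap.inl_apply, smul_eq_mul, neg_mul, ← div_eq_inv_mul]
  rw [neg_le, le_div_iff₀ hpos]
  linarith

theorem ConvexOn.finset_sup' {𝕜 F β ι' : Type*} [Semiring 𝕜] [PartialOrder 𝕜] [AddCommMonoid F]
    [AddCommMonoid β] [LinearOrder β] [IsOrderedAddMonoid β] [SMul 𝕜 F] [Module 𝕜 β]
    [PosSMulStrictMono 𝕜 β] {s : Set F} {t : Finset ι'} (ht : t.Nonempty) {f : ι' → F → β}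
    (hf : ∀ i ∈ t, ConvexOn 𝕜 s (f i)) : ConvexOn 𝕜 s (t.sup' ht f) :=
  Finset.sup'_induction ht f (fun _ h₁ _ h₂ => h₁.sup h₂) hf

theorem exists_convexOn_eq_of_forall_exists_affine_support [Fintype ι] (T : ι → E) (f : ι → ℝ)
    (h : ∀ i, ∃ (φ : E →ₗ[ℝ] ℝ) (b : ℝ), (∀ j, φ (T j) + b ≤ f j) ∧ φ (T i) + b = f i) :
    ∃ g : E → ℝ, ConvexOn ℝ univ g ∧ ∀ i, g (T i) = f i := by
  rcases isEmpty_or_nonempty ι with hι | hι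
  · exact ⟨0, convexOn_const 0 convex_univ, isEmptyElim⟩
  choose φ b hφ hφi using h
  refine ⟨univ.sup' univ_nonempty fun i x => φ i x + b i,
    ConvexOn.finset_sup' _ fun i _ => ((φ i).convexOn convex_univ).add_const (b i), fun i => ?_⟩
  rw [Finset.sup'_apply]
  exact le_antisymm (Finset.sup'_le _ _ fun j _ => hφ j i)
    (hφi i ▸ Finset.le_sup' (fun j => φ j (T i) + b j) (mem_univ i))

/-- The convex roof `ĝ(x)` of the paper is `sInf (roofValues T f x)`. -/
def roofValues [Fintype ι] (T : ι → E) (f : ι → ℝ) (x : E) : Set ℝ :=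
  {y | ∃ lam : ι → ℝ, (∀ j, 0 ≤ lam j) ∧ (∑ j, lam j = 1) ∧ (∑ j, lam j • T j = x) ∧
    y = ∑ j, lam j * f j}

section roofValues

variable [Fintype ι] (T : ι → E) (f : ι → ℝ)

theorem bddBelow_roofValues (x : E) : BddBelow (roofValues T f x) := by
  refine ((isCompact_stdSimplex ℝ ι).image (f := fun lam : ι → ℝ => ∑ j, lam j * f j)
    (by fun_prop)).bddBelow.mono ?_
  rintro _ ⟨lam, hlam, hsum, -, rfl⟩
  exact ⟨lam, ⟨hlam, hsum⟩, rfl⟩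

theorem self_mem_roofValues (i : ι) : f i ∈ roofValues T f (T i) := by
  classical
  exact ⟨Pi.single i 1, fun j => by by_cases h : j = i <;> simp [h], by simp, by simp,
    by simp [Pi.single_apply]⟩

theorem ConvexOn.le_of_mem_roofValues {g : E → ℝ} (hg : ConvexOn ℝ univ g)
    (hgf : ∀ j, g (T j) = f j) {x : E} {y : ℝ} (hy : y ∈ roofValues T f x) : g x ≤ y := by
  obtain ⟨lam, hlam, hsum, rfl, rfl⟩ := hy
  simpa [hgf] using hg.map_sum_le (fun j _ => hlam j) hsum fun j _ => mem_univ (T j)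

theorem exists_affine_support_of_forall_le_roofValues [TopologicalSpace E]
    [IsTopologicalAddGroup E] [ContinuousSMul ℝ E] [LocallyConvexSpace ℝ E] [T2Space E] {i : ι}
    (hi : ∀ y ∈ roofValues T f (T i), f i ≤ y) :
    ∃ (φ : StrongDual ℝ E) (b : ℝ), (∀ j, φ (T j) + b ≤ f j) ∧ φ (T i) + b = f i := by
  suffices hcomb : ∀ c : ι → ℝ, (∀ j, 0 ≤ c j) → ∑ j, c j • (T j - T i) = 0 →
      0 ≤ ∑ j, c j * (f j - f i) by
    obtain ⟨φ, hφ⟩ := exists_strongDual_le_of_nonneg_combination _ _ hcomb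
    refine ⟨φ, f i - φ (T i), fun j => ?_, by ring⟩
    linarith [hφ j, map_sub φ (T j) (T i)]
  intro c hc hcT
  rcases (sum_nonneg fun j _ => hc j).eq_or_lt with hS | hS
  · have hc0 : ∀ j, c j = 0 := fun j =>
      (sum_eq_zero_iff_of_nonneg fun j _ => hc j).mp hS.symm j (mem_univ j)
    simp [hc0]
  have hmem : (∑ j, c j)⁻¹ * ∑ j, c j * f j ∈ roofValues T f (T i) := by
    refine ⟨fun j => (∑ j, c j)⁻¹ * c j, fun j => mul_nonneg (inv_nonneg.mpr hS.le) (hc j),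
      by rw [← mul_sum, inv_mul_cancel₀ hS.ne'], ?_, by rw [mul_sum]; simp only [mul_assoc]⟩
    rw [sum_congr rfl fun j _ => smul_sub (c j) (T j) (T i), sum_sub_distrib, ← sum_smul,
      sub_eq_zero] at hcT
    simp_rw [mul_smul]
    rw [← smul_sum, hcT, inv_smul_smul₀ hS.ne']
  have := hi _ hmem
  rw [le_inv_mul_iff₀ hS] at this
  simp only [mul_sub, sum_sub_distrib, ← sum_mul]
  linarith

end roofValues

theorem convex_extension_iff_roof_general (m n : ℕ) (T : Fin n → (Fin m → ℝ))
    (f : Fin n → ℝ) :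
    (∃ g : (Fin m → ℝ) → ℝ, ConvexOn ℝ Set.univ g ∧ ∀ i, g (T i) = f i) ↔
      (∀ i : Fin n,
        sInf {y : ℝ | ∃ lam : Fin n → ℝ,
          (∀ j, 0 ≤ lam j) ∧ (∑ j, lam j = 1) ∧ (∑ j, lam j • T j = T i) ∧
          y = ∑ j, lam j * f j} = f i) := by
  change _ ↔ ∀ i, sInf (roofValues T f (T i)) = f i
  constructor
  · rintro ⟨g, hg, hgf⟩ i
    refine le_antisymm (csInf_le (bddBelow_roofValues T f _) (self_mem_roofValues T f i)) ?_
    exact le_csInf ⟨_, self_mem_roofValues T f i⟩ fun y hy =>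
      hgf i ▸ ConvexOn.le_of_mem_roofValues T f hg hgf hy
  · intro hroof
    refine exists_convexOn_eq_of_forall_exists_affine_support T f fun i => ?_
    obtain ⟨φ, b, hφ, hφi⟩ := exists_affine_support_of_forall_le_roofValues T f fun y hy =>
      hroof i ▸ csInf_le (bddBelow_roofValues T f _) hy
    exact ⟨φ.toLinearMap, b, hφ, hφi⟩

/-- assuming the convex hull of the defined points has nonempty
interior, the partial function is extendible to a convex function on `ℝ^m` iff
the convex roof `ĝ` equals the prescribed values at the defined points. -/
theorem convex_extension_iff_roof (m n : ℕ) (T : Fin n → (Fin m → ℝ))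
    (f : Fin n → ℝ)
    (hint : (interior (convexHull ℝ (Set.range T))).Nonempty) :
    (∃ g : (Fin m → ℝ) → ℝ, ConvexOn ℝ Set.univ g ∧ ∀ i, g (T i) = f i) ↔
      (∀ i : Fin n,
        sInf {y : ℝ | ∃ lam : Fin n → ℝ,
          (∀ j, 0 ≤ lam j) ∧ (∑ j, lam j = 1) ∧ (∑ j, lam j • T j = T i) ∧
          y = ∑ j, lam j * f j} = f i) :=
  convex_extension_iff_roof_general m n T f
end

section
/- Let A be an integer n×m matrix and b an integer n-vector, and let U be the largest absolute value among the entries of A and b. Then every extreme point y of the polyhedron P = {y ∈ ℝ^m : Ay ≤ b} satisfies |y_j| ≤ (mU)^m for all j, and moreover if y_j ≠ 0 then |y_j| ≥ 1/(mU)^m. -/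
/-!
At an extreme point `y` the tight constraints admit no common nonzero direction `d`: otherwise
`y ± t • d` would be feasible for small `t`, with `y` as their midpoint. Hence `m` tight rows are
linearly independent, and Cramer's rule on that square integer subsystem `M y = c` writes each
`y j` as `det (M.updateCol j c) / det M`. Both determinants are integers of absolute value at most
`m! U^m ≤ (mU)^m`; the denominator is nonzero, hence at least `1`, and so is the numerator when
`y j ≠ 0`.
-/

open Filter Topology Matrix

namespace Matrix

variable {n : Type*} [Fintype n] [DecidableEq n]

theorem exists_det_submatrix_ne_zero_of_mulVec_injective {ι K : Type*} [Field K] [Finite ι]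
    {A : Matrix ι n K} (hA : Function.Injective A.mulVec) :
    ∃ g : n → ι, (A.submatrix g id).det ≠ 0 := by
  have hspan : Submodule.span K (Set.range A.row) = ⊤ := by
    apply Submodule.eq_top_of_finrank_eq
    rw [← rank_eq_finrank_span_row]
    exact LinearMap.finrank_range_of_inj (f := A.mulVecLin) hA
  obtain ⟨κ, a, ha, hspan', hli⟩ := exists_linearIndependent' K A.row
  have : Finite κ := .of_injective a ha
  have : Fintype κ := .ofFinite κ
  have hcard : Fintype.card κ = Fintype.card n := by
    rw [linearIndependent_iff_card_eq_finrank_span.1 hli, Set.finrank, hspan', hspan,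
      finrank_top, Module.finrank_fintype_fun_eq_card]
  let e : n ≃ κ := Fintype.equivOfCardEq hcard.symm
  refine ⟨a ∘ e, fun h => ?_⟩
  have hrows : LinearIndependent K (A.submatrix (a ∘ e) id).row := hli.comp e e.injective
  exact ((isUnit_iff_isUnit_det _).1 (linearIndependent_rows_iff_isUnit.1 hrows)).ne_zero h

theorem det_mul_eq_det_updateCol_of_mulVec_eq {R : Type*} [CommRing R] {M : Matrix n n R}
    {x c : n → R} (h : M *ᵥ x = c) (j : n) :
    M.det * x j = (M.updateCol j c).det := by
  rw [← cramer_apply, ← h, cramer_eq_adjugate_mulVec, mulVec_mulVec, adjugate_mul, smul_mulVec,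
    one_mulVec, Pi.smul_apply, smul_eq_mul]

theorem abs_det_le_pow {R : Type*} [CommRing R] [LinearOrder R] [IsStrictOrderedRing R]
    {M : Matrix n n R} {x : R} (hM : ∀ i j, |M i j| ≤ x) :
    |M.det| ≤ (Fintype.card n * x) ^ Fintype.card n := by
  obtain hn | ⟨⟨i⟩⟩ := isEmpty_or_nonempty n
  · simp
  have hx : 0 ≤ x := (abs_nonneg _).trans (hM i i)
  calc |M.det| ≤ (Fintype.card n).factorial • x ^ Fintype.card n :=
        det_le (abv := AbsoluteValue.abs) hM
    _ ≤ (Fintype.card n : R) ^ Fintype.card n * x ^ Fintype.card n := by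
        rw [nsmul_eq_mul]
        gcongr
        exact_mod_cast Nat.factorial_le_pow _
    _ = _ := (mul_pow _ _ _).symm

end Matrix

theorem eq_zero_of_mem_extremePoints_of_forall_tight {ι E : Type*} [Finite ι] [AddCommGroup E]
    [Module ℝ E] {f : ι → E →ₗ[ℝ] ℝ} {b : ι → ℝ} {x d : E}
    (hx : x ∈ Set.extremePoints ℝ {z | ∀ i, f i z ≤ b i}) (hd : ∀ i, f i x = b i → f i d = 0) :
    d = 0 := by
  set P := {z | ∀ i, f i z ≤ b i}
  have hline : ∀ᶠ t : ℝ in 𝓝 0, x + t • d ∈ P := by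
    refine eventually_all.2 fun i => ?_
    simp only [map_add, map_smul, smul_eq_mul]
    rcases (hx.1 i).eq_or_lt with htight | hslack
    · exact .of_forall fun t => by simp [htight, hd i htight]
    · have hcont : Continuous fun t : ℝ => f i x + t * f i d := by fun_prop
      exact ((by simpa using hcont.tendsto 0 : Tendsto _ _ (𝓝 (f i x))).eventually
        (gt_mem_nhds hslack)).mono fun _ => le_of_lt
  have hsym : ∀ᶠ t : ℝ in 𝓝[≠] 0, (x + t • d ∈ P ∧ x + (-t) • d ∈ P) ∧ t ≠ 0 :=
    ((hline.and ((continuous_neg.tendsto' 0 0 neg_zero).eventually hline)).filter_mono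
      nhdsWithin_le_nhds).and self_mem_nhdsWithin
  obtain ⟨t, ⟨hplus, hminus⟩, ht⟩ := hsym.exists
  rw [neg_smul, ← sub_eq_add_neg] at hminus
  have hfix : x + t • d = x := hx.2 hplus hminus (mem_openSegment_add_sub x (t • d))
  rw [add_eq_left, smul_eq_zero] at hfix
  exact hfix.resolve_left ht

theorem Matrix.mulVec_injective_submatrix_tight_of_mem_extremePoints {ι n : Type*} [Finite ι]
    [Fintype n] {A : Matrix ι n ℝ} {b : ι → ℝ} {x : n → ℝ}
    (hx : x ∈ Set.extremePoints ℝ {z | ∀ i, (A *ᵥ z) i ≤ b i}) :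
    Function.Injective (A.submatrix (Subtype.val : {i // (A *ᵥ x) i = b i} → ι) id).mulVec := by
  intro d₁ d₂ h
  refine sub_eq_zero.1 (eq_zero_of_mem_extremePoints_of_forall_tight
    (f := fun i => (LinearMap.proj i).comp A.mulVecLin) hx fun i hi => ?_)
  simp only [LinearMap.comp_apply, mulVecLin_apply, LinearMap.proj_apply, mulVec_sub, Pi.sub_apply]
  exact sub_eq_zero.2 (congrFun h ⟨i, hi⟩)

theorem abs_le_and_inv_le_abs_of_intCast_mul_eq {D N : ℤ} {x B : ℝ} (hD : D ≠ 0)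
    (hDB : |(D : ℝ)| ≤ B) (hNB : |(N : ℝ)| ≤ B) (h : D * x = N) :
    |x| ≤ B ∧ (x ≠ 0 → 1 / B ≤ |x|) := by
  have hD1 : (1 : ℝ) ≤ |(D : ℝ)| := by exact_mod_cast Int.one_le_abs hD
  have habs : |(D : ℝ)| * |x| = |(N : ℝ)| := by rw [← abs_mul, h]
  refine ⟨by nlinarith [abs_nonneg x], fun hx => ?_⟩
  have hN1 : (1 : ℝ) ≤ |(N : ℝ)| := by
    have hN : N ≠ 0 := by rintro rfl; simp_all
    exact_mod_cast Int.one_le_abs hN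
  rw [div_le_iff₀ (by linarith)]
  nlinarith [abs_nonneg x]

/-- extreme points of an integer polyhedron `{y : Ay ≤ b}` have
coordinates bounded by `(mU)^m` in absolute value, and nonzero coordinates bounded
below by `1/(mU)^m`, where `U` bounds the absolute values of the entries of `A`, `b`. -/
theorem extreme_point_coordinate_bounds (n m : ℕ) (A : Matrix (Fin n) (Fin m) ℤ)
    (b : Fin n → ℤ) (U : ℕ)
    (hA : ∀ i j, |A i j| ≤ (U : ℤ)) (hb : ∀ i, |b i| ≤ (U : ℤ))
    (y : Fin m → ℝ)
    (hy : y ∈ Set.extremePoints ℝ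
      {z : Fin m → ℝ | ∀ i, (∑ j, (A i j : ℝ) * z j) ≤ (b i : ℝ)}) :
    ∀ j : Fin m, |y j| ≤ ((m * U : ℝ)) ^ m ∧
      (y j ≠ 0 → 1 / ((m * U : ℝ)) ^ m ≤ |y j|) := by
  classical
  obtain ⟨g, hg⟩ := exists_det_submatrix_ne_zero_of_mulVec_injective
    (mulVec_injective_submatrix_tight_of_mem_extremePoints (A := A.map (↑)) (b := (↑) ∘ b) hy)
  set M : Matrix (Fin m) (Fin m) ℤ := A.submatrix (fun k => (g k : Fin n)) id
  set c : Fin m → ℤ := fun k => b (g k)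
  have hMdet : M.det ≠ 0 := by rwa [← Int.cast_ne_zero (α := ℝ), Int.cast_det]
  have hMy : M.map (↑) *ᵥ y = fun k => (c k : ℝ) := funext fun k => (g k).2
  have hdet_le : ∀ X : Matrix (Fin m) (Fin m) ℤ, (∀ k l, |X k l| ≤ U) →
      |(X.det : ℝ)| ≤ (m * U : ℝ) ^ m := by
    intro X hX
    have hX' := abs_det_le_pow hX
    rw [Fintype.card_fin] at hX'
    exact_mod_cast hX'
  intro j
  refine abs_le_and_inv_le_abs_of_intCast_mul_eq hMdet (hdet_le M fun k l => hA _ _)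
    (hdet_le (M.updateCol j c) fun k l => ?_) ?_
  · rw [updateCol_apply]
    split_ifs
    exacts [hb _, hA _ _]
  · rw [Int.cast_det, Int.cast_det, map_updateCol]
    exact det_mul_eq_det_updateCol_of_mulVec_eq hMy j
end

section
/- Let D = {T_1,...,T_n} ⊆ 2^[m] and let c_i ≤ d_i be reals for each i. There exists a convex function f: ℝ^m → ℝ with c_i ≤ f(T_i) ≤ d_i for all i (identifying T_i with its characteristic vector in ℝ^m) if and only if the convex roof ĝ of the partial function {(T_1,d_1),...,(T_n,d_n)} satisfies c_i ≤ ĝ(T_i) ≤ d_i for all i. -/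
/-!
Each characteristic vector `1_T` is a vertex of the cube `[0,1]^m`, exposed by the affine function
`ℓ_T x = ∑ k, (2 · 1_T k - 1) · (x k - 1_T k)`, which vanishes at `1_T` and is `≤ -1` at every
other vertex. Hence any values prescribed at the distinct points `1_{T_i}`, in particular the roof
values `ĝ(T_i)`, are taken by the convex function `x ↦ max_j (ĝ(T_j) + K · ℓ_{T_j} x)` once `K` is
at least the spread of the values. Conversely, Jensen's inequality gives `f ≤ ĝ` for every convex
`f` with `f(T_i) ≤ d_i`.
-/

/-- The characteristic vector of a subset of `[m]`. -/
def charVec {m : ℕ} (S : Finset (Fin m)) : Fin m → ℝ :=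
  fun j => if j ∈ S then 1 else 0

open Finset Set

section ConvexRoof

variable {ι E : Type*} [Fintype ι] [AddCommGroup E] [Module ℝ E]

def roofSet (p : ι → E) (d : ι → ℝ) (x : E) : Set ℝ :=
  {y | ∃ lam : ι → ℝ, (∀ j, 0 ≤ lam j) ∧ (∑ j, lam j = 1) ∧ (∑ j, lam j • p j = x) ∧
    y = ∑ j, lam j * d j}

/-- The paper's `ĝ`. Off `convexHull ℝ (range p)` the set `roofSet p d x` is empty and the value is
the junk `sInf ∅ = 0`. -/
noncomputable def convexRoof (p : ι → E) (d : ι → ℝ) (x : E) : ℝ :=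
  sInf (roofSet p d x)

theorem mem_roofSet_self [DecidableEq ι] (p : ι → E) (d : ι → ℝ) (i : ι) :
    d i ∈ roofSet p d (p i) :=
  ⟨Pi.single i 1, (Pi.single_nonneg.2 zero_le_one : (0 : ι → ℝ) ≤ Pi.single i 1), by simp,
    by simp [Pi.single_apply], by simp [Pi.single_apply]⟩

theorem ConvexOn.le_of_mem_roofSet {s : Set E} {f : E → ℝ} {p : ι → E} {d : ι → ℝ} {x : E}
    {y : ℝ} (hf : ConvexOn ℝ s f) (hps : ∀ j, p j ∈ s) (hfd : ∀ j, f (p j) ≤ d j)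
    (hy : y ∈ roofSet p d x) : f x ≤ y := by
  obtain ⟨lam, hlam₀, hlam₁, rfl, rfl⟩ := hy
  calc f (∑ j, lam j • p j) ≤ ∑ j, lam j • f (p j) :=
        hf.map_sum_le (fun j _ => hlam₀ j) hlam₁ fun j _ => hps j
    _ ≤ ∑ j, lam j * d j := sum_le_sum fun j _ => mul_le_mul_of_nonneg_left (hfd j) (hlam₀ j)

end ConvexRoof

theorem convexOn_ciSup {ι E : Type*} [Finite ι] [AddCommGroup E] [Module ℝ E] {s : Set E}
    {f : ι → E → ℝ} (hs : Convex ℝ s) (hf : ∀ i, ConvexOn ℝ s (f i)) :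
    ConvexOn ℝ s fun x => ⨆ i, f i x := by
  rcases isEmpty_or_nonempty ι with hι | hι
  · simpa only [Real.iSup_of_isEmpty] using convexOn_const 0 hs
  refine ⟨hs, fun x hx y hy a b ha hb hab => ciSup_le fun i => ?_⟩
  have hbdd : ∀ z, BddAbove (Set.range fun i => f i z) := fun z => (Set.finite_range _).bddAbove
  calc f i (a • x + b • y) ≤ a • f i x + b • f i y := (hf i).2 hx hy ha hb hab
    _ ≤ a • (⨆ i, f i x) + b • ⨆ i, f i y :=
      add_le_add (smul_le_smul_of_nonneg_left (le_ciSup (hbdd x) i) ha)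
        (smul_le_smul_of_nonneg_left (le_ciSup (hbdd y) i) hb)

theorem exists_convexOn_eq_at_exposed_points {ι E : Type*} [Finite ι] [AddCommGroup E]
    [Module ℝ E] (p : ι → E) (ℓ : ι → E → ℝ) (hℓ : ∀ i, ConvexOn ℝ univ (ℓ i))
    (hℓ_self : ∀ i, ℓ i (p i) = 0) (hℓ_ne : ∀ i j, p j ≠ p i → ℓ i (p j) ≤ -1) (φ : E → ℝ) :
    ∃ f : E → ℝ, ConvexOn ℝ univ f ∧ ∀ i, f (p i) = φ (p i) := by
  obtain ⟨K, hK, hspread⟩ : ∃ K : ℝ, 0 ≤ K ∧ ∀ i j, φ (p j) - φ (p i) ≤ K := by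
    obtain ⟨K, hK⟩ := (Set.finite_range fun ij : ι × ι => φ (p ij.2) - φ (p ij.1)).bddAbove
    exact ⟨max K 0, le_max_right _ _, fun i j => (hK ⟨(i, j), rfl⟩).trans (le_max_left _ _)⟩
  refine ⟨fun x => ⨆ j, (K * ℓ j x + φ (p j)),
    convexOn_ciSup convex_univ fun j => ((hℓ j).smul hK).add_const _, fun i => ?_⟩
  have : Nonempty ι := ⟨i⟩
  apply le_antisymm
  · refine ciSup_le fun j => ?_
    by_cases hij : p i = p j
    · simp [hij, hℓ_self]
    · nlinarith [hℓ_ne j i hij, hspread i j]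
  · exact le_ciSup_of_le (Set.finite_range _).bddAbove i (by simp [hℓ_self])

section CharVec

variable {m : ℕ}

def charVecExposer (T : Finset (Fin m)) (x : Fin m → ℝ) : ℝ :=
  ∑ k, (2 * charVec T k - 1) * (x k - charVec T k)

theorem convexOn_charVecExposer (T : Finset (Fin m)) : ConvexOn ℝ univ (charVecExposer T) := by
  refine ⟨convex_univ, fun x _ y _ a b _ _ hab => le_of_eq ?_⟩
  simp only [charVecExposer, smul_eq_mul, mul_sum, ← sum_add_distrib]
  refine sum_congr rfl fun k _ => ?_
  simp only [Pi.add_apply, Pi.smul_apply, smul_eq_mul]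
  linear_combination (2 * charVec T k - 1) * charVec T k * hab

theorem charVecExposer_self (T : Finset (Fin m)) : charVecExposer T (charVec T) = 0 := by
  simp [charVecExposer]

theorem charVecExposer_le_neg_one {S T : Finset (Fin m)} (h : charVec S ≠ charVec T) :
    charVecExposer T (charVec S) ≤ -1 := by
  obtain ⟨k, hk⟩ := Function.ne_iff.1 h
  -- the summand at `j` is `0` if `1_S j = 1_T j` and `-1` otherwise
  calc charVecExposer T (charVec S) ≤ ∑ j, if j = k then (-1 : ℝ) else 0 := by
        refine sum_le_sum fun j _ => ?_
        by_cases hjk : j = k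
        · subst hjk
          simp only [charVec] at hk ⊢
          split_ifs at hk ⊢ <;> norm_num at *
        · simp only [charVec, hjk, if_false]
          split_ifs <;> norm_num
    _ = -1 := by simp

end CharVec

theorem convex_sandwich_iff_roof_general (m n : ℕ) (T : Fin n → Finset (Fin m))
    (c d : Fin n → ℝ) :
    (∃ f : (Fin m → ℝ) → ℝ, ConvexOn ℝ Set.univ f ∧
        ∀ i, c i ≤ f (charVec (T i)) ∧ f (charVec (T i)) ≤ d i) ↔
      (∀ i : Fin n,
        c i ≤ sInf {y : ℝ | ∃ lam : Fin n → ℝ,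
            (∀ j, 0 ≤ lam j) ∧ (∑ j, lam j = 1) ∧
            (∑ j, lam j • charVec (T j) = charVec (T i)) ∧
            y = ∑ j, lam j * d j} ∧
          sInf {y : ℝ | ∃ lam : Fin n → ℝ,
            (∀ j, 0 ≤ lam j) ∧ (∑ j, lam j = 1) ∧
            (∑ j, lam j • charVec (T j) = charVec (T i)) ∧
            y = ∑ j, lam j * d j} ≤ d i) := by
  set p : Fin n → Fin m → ℝ := fun i => charVec (T i)
  change _ ↔ ∀ i, c i ≤ convexRoof p d (p i) ∧ convexRoof p d (p i) ≤ d i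
  constructor
  · rintro ⟨f, hf, hfcd⟩ i
    have hle : ∀ y ∈ roofSet p d (p i), f (p i) ≤ y :=
      fun y hy => hf.le_of_mem_roofSet (fun _ => mem_univ _) (fun j => (hfcd j).2) hy
    exact ⟨(hfcd i).1.trans (le_csInf ⟨_, mem_roofSet_self p d i⟩ hle),
      csInf_le ⟨_, hle⟩ (mem_roofSet_self p d i)⟩
  · intro h
    obtain ⟨f, hf, hfp⟩ := exists_convexOn_eq_at_exposed_points p (fun i => charVecExposer (T i))
      (fun _ => convexOn_charVecExposer _) (fun _ => charVecExposer_self _)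
      (fun _ _ hji => charVecExposer_le_neg_one hji) (convexRoof p d)
    exact ⟨f, hf, fun i => hfp i ▸ h i⟩

/-- there is a convex function on `ℝ^m` whose value at each defined
point `Tᵢ` lies in `[cᵢ, dᵢ]` iff the convex roof `ĝ` of the partial function with
values `dᵢ` satisfies `cᵢ ≤ ĝ(Tᵢ) ≤ dᵢ` for all `i`. -/
theorem convex_sandwich_iff_roof (m n : ℕ) (T : Fin n → Finset (Fin m))
    (c d : Fin n → ℝ) (hcd : ∀ i, c i ≤ d i)
    (hint : (interior (convexHull ℝ (Set.range (fun i => charVec (T i))))).Nonempty) :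
    (∃ f : (Fin m → ℝ) → ℝ, ConvexOn ℝ Set.univ f ∧
        ∀ i, c i ≤ f (charVec (T i)) ∧ f (charVec (T i)) ≤ d i) ↔
      (∀ i : Fin n,
        c i ≤ sInf {y : ℝ | ∃ lam : Fin n → ℝ,
            (∀ j, 0 ≤ lam j) ∧ (∑ j, lam j = 1) ∧
            (∑ j, lam j • charVec (T j) = charVec (T i)) ∧
            y = ∑ j, lam j * d j} ∧
          sInf {y : ℝ | ∃ lam : Fin n → ℝ,
            (∀ j, 0 ≤ lam j) ∧ (∑ j, lam j = 1) ∧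
            (∑ j, lam j • charVec (T j) = charVec (T i)) ∧
            y = ∑ j, lam j * d j} ≤ d i) :=
  convex_sandwich_iff_roof_general m n T c d
end
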